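/- arXiv:1302.4502 — 3 statements merged into one kernel-verified Lean document; each statement's English description precedes it below -/
import Mathlib

section
/- Let m ≥ 2. Given the Hjelmslev construction data — a projective plane 𝒫 of order m; for each point p of 𝒫 an affine plane 𝒜_p of order m; for each line l of 𝒫 an orthogonal array 𝒪_l = OA(2, m+1, m) whose columns are labeled by the m+1 points of l; and for each incident point–line pair (p, l) a parallel class C(p,l) of 𝒜_p together with a bijective labeling of its m lines by the m symbols of 𝒪_l, such that distinct lines of 𝒫 through p are assigned distinct parallel classes of 𝒜_p — define the incidence structure ℋ whose points are pairs (p, a) with p a point of 𝒫 and a a point of 𝒜_p, whose lines are pairs (l, r) with l a line of 𝒫 and r a row of 𝒪_l, with (p, a) incident with (l, r) if and only if p lies on l and a lies on the line of C(p,l) labeled by the entry of 𝒪_l in row r and column p. Then ℋ, with point-neighbour relation (p,a) ∼ (p',a') iff p = p', line-neighbour relation (l,r) ∼ (l',r') iff l = l', and the quotient map φ(p,a) = p, φ(l,r) = l, is a 2-uniform (m,m) projective Hjelmslev plane. -/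
/-- A projective plane: any two distinct points lie on a unique common line, any two distinct
lines meet in a unique point, and there are four points no three of which are collinear. -/
structure IsProjectivePlane {P L : Type} (I : P → L → Prop) : Prop where
  point_line : ∀ p q : P, p ≠ q → ∃! l : L, I p l ∧ I q l
  line_point : ∀ g h : L, g ≠ h → ∃! p : P, I p g ∧ I p h
  nondeg : ∃ a b c d : P, a ≠ b ∧ a ≠ c ∧ a ≠ d ∧ b ≠ c ∧ b ≠ d ∧ c ≠ d ∧
    (∀ l : L, ¬(I a l ∧ I b l ∧ I c l)) ∧ (∀ l : L, ¬(I a l ∧ I b l ∧ I d l)) ∧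
    (∀ l : L, ¬(I a l ∧ I c l ∧ I d l)) ∧ (∀ l : L, ¬(I b l ∧ I c l ∧ I d l))

/-- A projective plane has order `m` if every line is incident with exactly `m + 1` points. -/
def ProjOrder {P L : Type} (I : P → L → Prop) (m : ℕ) : Prop :=
  ∀ l : L, Nat.card {p : P // I p l} = m + 1

/-- An affine plane: any two distinct points lie on a unique common line, for every
non-incident point–line pair there is a unique line through the point disjoint from the
line, and there exist three non-collinear points. -/
structure IsAffinePlane {P L : Type} (I : P → L → Prop) : Prop where
  point_line : ∀ p q : P, p ≠ q → ∃! l : L, I p l ∧ I q l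
  playfair : ∀ (p : P) (l : L), ¬ I p l → ∃! g : L, I p g ∧ ∀ q : P, ¬(I q l ∧ I q g)
  nondeg : ∃ a b c : P, a ≠ b ∧ a ≠ c ∧ b ≠ c ∧ ∀ l : L, ¬(I a l ∧ I b l ∧ I c l)

/-- An affine plane has order `m` if every line is incident with exactly `m` points. -/
def AffOrder {P L : Type} (I : P → L → Prop) (m : ℕ) : Prop :=
  ∀ l : L, Nat.card {p : P // I p l} = m

/-- Two lines are parallel if they are equal or disjoint. -/
def Parallel {P L : Type} (I : P → L → Prop) (g h : L) : Prop :=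
  g = h ∨ ∀ p : P, ¬(I p g ∧ I p h)

/-- A parallel class: an equivalence class of lines under parallelism. -/
def IsParallelClass {P L : Type} (I : P → L → Prop) (Cl : Set L) : Prop :=
  ∃ g : L, Cl = {h : L | Parallel I g h}

/-- The (strength-2) orthogonal array property: for any two distinct columns, the map sending
a row to its pair of entries in those columns is a bijection onto `S × S`, i.e. each ordered
pair of symbols occurs in exactly one row. -/
def IsOrthArray2 {R Col S : Type} (F : R → Col → S) : Prop :=
  ∀ c₁ c₂ : Col, c₁ ≠ c₂ → Function.Bijective (fun r : R => (F r c₁, F r c₂))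
/-- Data for the (projective) Hjelmslev construction: a projective plane `𝒫` of order `m`;
for each point `p` of `𝒫` an affine plane `𝒜_p` of order `m`; for each line `l` of `𝒫` an
orthogonal array `OA(2, m+1, m)` whose columns are indexed by the `m+1` points of `l`; and
for each incident pair `(p, l)` a parallel class of `𝒜_p` whose `m` lines are labeled
bijectively by the `m` symbols of `𝒪_l`, such that distinct lines of `𝒫` through `p`
receive distinct parallel classes of `𝒜_p`. -/
structure PHData (m : ℕ) : Type 1 where
  /-- points of the projective plane `𝒫` -/
  Pt : Type
  /-- lines of the projective plane `𝒫` -/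
  Ln : Type
  /-- incidence of `𝒫` -/
  I : Pt → Ln → Prop
  proj : IsProjectivePlane I
  ord : ProjOrder I m
  /-- points of the affine plane `𝒜_p` -/
  APt : Pt → Type
  /-- lines of the affine plane `𝒜_p` -/
  ALn : Pt → Type
  /-- incidence of `𝒜_p` -/
  AI : ∀ p : Pt, APt p → ALn p → Prop
  aff : ∀ p : Pt, IsAffinePlane (AI p)
  aord : ∀ p : Pt, AffOrder (AI p) m
  /-- rows of the orthogonal array `𝒪_l` -/
  Row : Ln → Type
  /-- symbols of the orthogonal array `𝒪_l` -/
  Sym : Ln → Type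
  row_card : ∀ l : Ln, Nat.card (Row l) = m ^ 2
  sym_card : ∀ l : Ln, Nat.card (Sym l) = m
  /-- the orthogonal array `𝒪_l`, with columns labeled by the points of `l` -/
  O : ∀ l : Ln, Row l → {p : Pt // I p l} → Sym l
  oa : ∀ l : Ln, IsOrthArray2 (O l)
  /-- the labeling of the chosen parallel class `C(p, l)`: symbol `s` labels line `C p l h s` -/
  C : ∀ (p : Pt) (l : Ln), I p l → Sym l → ALn p
  C_inj : ∀ (p : Pt) (l : Ln) (h : I p l), Function.Injective (C p l h)
  C_class : ∀ (p : Pt) (l : Ln) (h : I p l), IsParallelClass (AI p) (Set.range (C p l h))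
  C_distinct : ∀ (p : Pt) (l₁ l₂ : Ln) (h₁ : I p l₁) (h₂ : I p l₂), l₁ ≠ l₂ →
    Set.range (C p l₁ h₁) ≠ Set.range (C p l₂ h₂)

/-- Points of the constructed structure `ℋ`: pairs `(p, a)` with `p` a point of `𝒫` and `a`
a point of `𝒜_p`. -/
def PHData.HPt {m : ℕ} (D : PHData m) : Type := Σ p : D.Pt, D.APt p

/-- Lines of the constructed structure `ℋ`: pairs `(l, r)` with `l` a line of `𝒫` and `r` a
row of `𝒪_l`. -/
def PHData.HLn {m : ℕ} (D : PHData m) : Type := Σ l : D.Ln, D.Row l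

/-- Incidence of `ℋ`: `(p, a)` is incident with `(l, r)` iff `p` lies on `l` and `a` lies on
the line of `C(p, l)` labeled by the entry of `𝒪_l` in row `r` and column `p`. -/
def PHData.HI {m : ℕ} (D : PHData m) : D.HPt → D.HLn → Prop :=
  fun x g => ∃ h : D.I x.1 g.1, D.AI x.1 x.2 (D.C x.1 g.1 h (D.O g.1 g.2 ⟨x.1, h⟩))

/-- Point-neighbour relation of `ℋ`: `(p, a) ∼ (p', a')` iff `p = p'`. -/
def PHData.nPt {m : ℕ} (D : PHData m) : D.HPt → D.HPt → Prop := fun x y => x.1 = y.1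

/-- Line-neighbour relation of `ℋ`: `(l, r) ∼ (l', r')` iff `l = l'`. -/
def PHData.nLn {m : ℕ} (D : PHData m) : D.HLn → D.HLn → Prop := fun g h => g.1 = h.1

/-- `ℋ = (I, nP, nL)` is a projective Hjelmslev plane with (specified) epimorphism
`(φP, φL)` onto the projective plane `I'`. -/
structure IsPHPlaneWith {P L P' L' : Type} (I : P → L → Prop)
    (nP : P → P → Prop) (nL : L → L → Prop)
    (I' : P' → L' → Prop) (φP : P → P') (φL : L → L') : Prop where
  nP_equiv : Equivalence nP
  nL_equiv : Equivalence nL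
  join : ∀ p q : P, ∃ l : L, I p l ∧ I q l
  meet : ∀ g h : L, ∃ p : P, I p g ∧ I p h
  line_nbr : ∀ g h : L, (∃ p q : P, p ≠ q ∧ I p g ∧ I p h ∧ I q g ∧ I q h) → nL g h
  point_nbr : ∀ p q : P, (∃ g h : L, g ≠ h ∧ I p g ∧ I q g ∧ I p h ∧ I q h) → nP p q
  target_proj : IsProjectivePlane I'
  φP_surj : Function.Surjective φP
  φL_surj : Function.Surjective φL
  incid_pres : ∀ (p : P) (l : L), I p l → I' (φP p) (φL l)
  nP_iff : ∀ p q : P, φP p = φP q ↔ nP p q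
  nL_iff : ∀ g h : L, φL g = φL h ↔ nL g h

/-- `ℋ = (I, nP, nL)` is an affine Hjelmslev plane with (specified) epimorphism
`(φP, φL)` onto the affine plane `I'`. -/
structure IsAHPlaneWith {P L P' L' : Type} (I : P → L → Prop)
    (nP : P → P → Prop) (nL : L → L → Prop)
    (I' : P' → L' → Prop) (φP : P → P') (φL : L → L') : Prop where
  nP_equiv : Equivalence nP
  nL_equiv : Equivalence nL
  join : ∀ p q : P, ∃ l : L, I p l ∧ I q l
  line_nbr : ∀ g h : L, (∃ p q : P, p ≠ q ∧ I p g ∧ I p h ∧ I q g ∧ I q h) → nL g h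
  target_aff : IsAffinePlane I'
  φP_surj : Function.Surjective φP
  φL_surj : Function.Surjective φL
  incid_pres : ∀ (p : P) (l : L), I p l → I' (φP p) (φL l)
  nP_iff : ∀ p q : P, φP p = φP q ↔ nP p q
  nL_iff : ∀ g h : L, φL g = φL h ↔ nL g h
  par : ∀ g h : L, (∀ p : P, ¬(I p g ∧ I p h)) → Parallel I' (φL g) (φL h)

/-- Each point of each line has exactly `t` neighbours on that line. -/
def NbrsOnLines {P L : Type} (I : P → L → Prop) (nP : P → P → Prop) (t : ℕ) : Prop :=
  ∀ (l : L) (p : P), I p l → Nat.card {q : P // I q l ∧ nP p q} = t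

/-- `ℋ` is a projective Hjelmslev plane (with associated projective plane unspecified). -/
def IsPHPlane {P L : Type} (I : P → L → Prop) (nP : P → P → Prop) (nL : L → L → Prop) :
    Prop :=
  ∃ (P' L' : Type) (I' : P' → L' → Prop) (φP : P → P') (φL : L → L'),
    IsPHPlaneWith I nP nL I' φP φL

/-- `ℋ` is a `(t, r)` projective Hjelmslev plane: each point of each line has exactly `t`
neighbours on that line, and the associated projective plane has order `r`. -/
def IsTRPHPlane {P L : Type} (I : P → L → Prop) (nP : P → P → Prop) (nL : L → L → Prop)
    (t r : ℕ) : Prop :=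
  ∃ (P' L' : Type) (I' : P' → L' → Prop) (φP : P → P') (φL : L → L'),
    IsPHPlaneWith I nP nL I' φP φL ∧ ProjOrder I' r ∧ NbrsOnLines I nP t

/-- `ℋ` is a `(t, r)` affine Hjelmslev plane: each point of each line has exactly `t`
neighbours on that line, and the associated affine plane has order `r`. -/
def IsTRAHPlane {P L : Type} (I : P → L → Prop) (nP : P → P → Prop) (nL : L → L → Prop)
    (t r : ℕ) : Prop :=
  ∃ (P' L' : Type) (I' : P' → L' → Prop) (φP : P → P') (φL : L → L'),
    IsAHPlaneWith I nP nL I' φP φL ∧ AffOrder I' r ∧ NbrsOnLines I nP t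

/-- The lines of the point-neighbourhood restriction at `p`: the nonempty intersections of
lines of `ℋ` with the neighbourhood of `p`, viewed as sets of points. -/
def NbrLines {P L : Type} (I : P → L → Prop) (nP : P → P → Prop) (p : P) : Set (Set P) :=
  {s : Set P | s.Nonempty ∧ ∃ g : L, s = {q : P | nP q p ∧ I q g}}

/-- `ℋ` is 2-uniform: every point-neighbourhood restriction is an ordinary affine plane, and
for each point, every line of the restriction is the restriction of the same number of lines
of `ℋ`. -/
def TwoUniform {P L : Type} (I : P → L → Prop) (nP : P → P → Prop) : Prop :=
  ∀ p : P,
    IsAffinePlane (fun (q : {q : P // nP q p}) (s : NbrLines I nP p) =>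
      (q : P) ∈ (s : Set P)) ∧
    ∃ n : ℕ, ∀ s : NbrLines I nP p,
      Nat.card {g : L // {q : P | nP q p ∧ I q g} = (s : Set P)} = n
/-- Data for the affine Hjelmslev construction: an affine plane `𝒜` of order `m`; for each
point `p` of `𝒜` an affine plane `𝒜_p` of order `m`; for each line `l` of `𝒜` an orthogonal
array `OA(2, m, m)` whose columns are indexed by the `m` points of `l`; and for each incident
pair `(p, l)` a parallel class of `𝒜_p` whose `m` lines are labeled bijectively by the `m`
symbols of `𝒪_l`, such that distinct lines of `𝒜` through `p` receive distinct parallel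
classes of `𝒜_p`. -/
structure AHData (m : ℕ) : Type 1 where
  /-- points of the base affine plane `𝒜` -/
  Pt : Type
  /-- lines of the base affine plane `𝒜` -/
  Ln : Type
  /-- incidence of `𝒜` -/
  I : Pt → Ln → Prop
  base : IsAffinePlane I
  ord : AffOrder I m
  /-- points of the affine plane `𝒜_p` -/
  APt : Pt → Type
  /-- lines of the affine plane `𝒜_p` -/
  ALn : Pt → Type
  /-- incidence of `𝒜_p` -/
  AI : ∀ p : Pt, APt p → ALn p → Prop
  aff : ∀ p : Pt, IsAffinePlane (AI p)
  aord : ∀ p : Pt, AffOrder (AI p) m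
  /-- rows of the orthogonal array `𝒪_l` -/
  Row : Ln → Type
  /-- symbols of the orthogonal array `𝒪_l` -/
  Sym : Ln → Type
  row_card : ∀ l : Ln, Nat.card (Row l) = m ^ 2
  sym_card : ∀ l : Ln, Nat.card (Sym l) = m
  /-- the orthogonal array `𝒪_l`, with columns labeled by the points of `l` -/
  O : ∀ l : Ln, Row l → {p : Pt // I p l} → Sym l
  oa : ∀ l : Ln, IsOrthArray2 (O l)
  /-- the labeling of the chosen parallel class `C(p, l)`: symbol `s` labels line `C p l h s` -/
  C : ∀ (p : Pt) (l : Ln), I p l → Sym l → ALn p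
  C_inj : ∀ (p : Pt) (l : Ln) (h : I p l), Function.Injective (C p l h)
  C_class : ∀ (p : Pt) (l : Ln) (h : I p l), IsParallelClass (AI p) (Set.range (C p l h))
  C_distinct : ∀ (p : Pt) (l₁ l₂ : Ln) (h₁ : I p l₁) (h₂ : I p l₂), l₁ ≠ l₂ →
    Set.range (C p l₁ h₁) ≠ Set.range (C p l₂ h₂)

/-- Points of the constructed structure `ℋ`: pairs `(p, a)` with `p` a point of `𝒜` and `a`
a point of `𝒜_p`. -/
def AHData.HPt {m : ℕ} (D : AHData m) : Type := Σ p : D.Pt, D.APt p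

/-- Lines of the constructed structure `ℋ`: pairs `(l, r)` with `l` a line of `𝒜` and `r` a
row of `𝒪_l`. -/
def AHData.HLn {m : ℕ} (D : AHData m) : Type := Σ l : D.Ln, D.Row l

/-- Incidence of `ℋ`: `(p, a)` is incident with `(l, r)` iff `p` lies on `l` and `a` lies on
the line of `C(p, l)` labeled by the entry of `𝒪_l` in row `r` and column `p`. -/
def AHData.HI {m : ℕ} (D : AHData m) : D.HPt → D.HLn → Prop :=
  fun x g => ∃ h : D.I x.1 g.1, D.AI x.1 x.2 (D.C x.1 g.1 h (D.O g.1 g.2 ⟨x.1, h⟩))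

/-- Point-neighbour relation of `ℋ`: `(p, a) ∼ (p', a')` iff `p = p'`. -/
def AHData.nPt {m : ℕ} (D : AHData m) : D.HPt → D.HPt → Prop := fun x y => x.1 = y.1

/-- Line-neighbour relation of `ℋ`: `(l, r) ∼ (l', r')` iff `l = l'`. -/
def AHData.nLn {m : ℕ} (D : AHData m) : D.HLn → D.HLn → Prop := fun g h => g.1 = h.1

/-!
Over a point `p` of `𝒫` the neighbourhood in `ℋ` is a copy of `𝒜_p`, and a line `(l, r)` of `ℋ`
with `p ∈ l` traces on it the line of the parallel class `C(p, l)` labelled by the entry of `𝒪_l`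
in row `r` and column `p`. Joining and meeting in `ℋ` therefore reduce to `𝒫` when the
projections differ and to `𝒜_p` when they agree. The orthogonal array supplies a row with
prescribed entries in two columns (to join points over distinct points of `l`), forces any two
rows to agree in some column (to meet lines over the same `l`), and determines a row by two of
its entries (so points over distinct base points share at most one line). Counting shows that
the `m + 1` lines of `𝒫` through `p` label all `m + 1` parallel classes of `𝒜_p`; hence every
line of `𝒜_p` is traced, by exactly the `m` rows of `𝒪_l` with the right entry in column `p`.
-/

section IncidenceGeometry

variable {P L : Type} {I : P → L → Prop}

theorem eq_of_two_common_points (hU : ∀ p q : P, p ≠ q → ∃! l : L, I p l ∧ I q l)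
    {p q : P} {g h : L} (hpq : p ≠ q) (hpg : I p g) (hqg : I q g) (hph : I p h)
    (hqh : I q h) : g = h :=
  (hU p q hpq).unique ⟨hpg, hqg⟩ ⟨hph, hqh⟩

theorem exists_not_incident_of_noncollinear (hU : ∀ p q : P, p ≠ q → ∃! l : L, I p l ∧ I q l)
    {b c d : P} (hbc : b ≠ c) (hbd : b ≠ d) (hcd : c ≠ d)
    (hbcd : ∀ l : L, ¬(I b l ∧ I c l ∧ I d l)) (a : P) : ∃ l : L, ¬ I a l := by
  obtain ⟨lbc, ⟨hb, hc⟩, -⟩ := hU b c hbc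
  obtain ⟨lbd, ⟨hb', hd⟩, -⟩ := hU b d hbd
  obtain ⟨lcd, ⟨hc', hd'⟩, -⟩ := hU c d hcd
  by_cases habc : I a lbc
  · by_cases habd : I a lbd
    · obtain rfl : a = b := by
        by_contra hab
        obtain rfl := eq_of_two_common_points hU hab habc hb habd hb'
        exact hbcd lbc ⟨hb, hc, hd⟩
      exact ⟨lcd, fun hacd => hbcd lcd ⟨hacd, hc', hd'⟩⟩
    · exact ⟨lbd, habd⟩
  · exact ⟨lbc, habc⟩

theorem card_lines_through_meeting (hU : ∀ p q : P, p ≠ q → ∃! l : L, I p l ∧ I q l)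
    {a : P} {l₀ : L} (ha : ¬ I a l₀) :
    Nat.card {g : L // I a g ∧ ∃ q, I q g ∧ I q l₀} = Nat.card {q : P // I q l₀} := by
  choose f hf using fun g : {g : L // I a g ∧ ∃ q, I q g ∧ I q l₀} => g.2.2
  refine Nat.card_eq_of_bijective (fun g => ⟨f g, (hf g).2⟩) ⟨fun g g' hgg' => ?_, fun q => ?_⟩
  · have hq : f g = f g' := congrArg Subtype.val hgg'
    have haq : a ≠ f g := fun e => ha (e ▸ (hf g).2)
    exact Subtype.ext (eq_of_two_common_points hU haq g.2.1 (hf g).1 g'.2.1 (hq ▸ (hf g').1))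
  · have haq : a ≠ q.1 := fun e => ha (e ▸ q.2)
    obtain ⟨g, ⟨hag, hqg⟩, -⟩ := hU a q haq
    refine ⟨⟨g, hag, q, hqg, q.2⟩, Subtype.ext ?_⟩
    by_contra hne
    exact ha (eq_of_two_common_points hU hne (hf _).1 hqg (hf _).2 q.2 ▸ hag)

theorem IsProjectivePlane.exists_not_incident (hP : IsProjectivePlane I) (a : P) :
    ∃ l : L, ¬ I a l := by
  obtain ⟨b, c, d, -, hbc, hbd, -, hcd, -, -, hbcd, -⟩ := hP.nondeg
  exact exists_not_incident_of_noncollinear hP.point_line hbc hbd hcd hbcd a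

theorem IsProjectivePlane.card_lines_through (hP : IsProjectivePlane I) {m : ℕ}
    (hord : ProjOrder I m) (a : P) : Nat.card {g : L // I a g} = m + 1 := by
  obtain ⟨l₀, ha⟩ := hP.exists_not_incident a
  rw [← hord l₀, ← card_lines_through_meeting hP.point_line ha]
  refine Nat.card_congr (Equiv.subtypeEquivRight fun g => ⟨fun hag => ⟨hag, ?_⟩, And.left⟩)
  obtain ⟨q, hq, -⟩ := hP.line_point g l₀ fun e => ha (e ▸ hag)
  exact ⟨q, hq⟩

theorem Parallel.symm {g h : L} : Parallel I g h → Parallel I h g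
  | .inl e => .inl e.symm
  | .inr hd => .inr fun p hp => hd p hp.symm

namespace IsAffinePlane

variable (hA : IsAffinePlane I)
include hA

theorem exists_not_incident (a : P) : ∃ l : L, ¬ I a l := by
  obtain ⟨b, c, d, hbc, hbd, hcd, hbcd⟩ := hA.nondeg
  exact exists_not_incident_of_noncollinear hA.point_line hbc hbd hcd hbcd a

theorem exists_incident (a : P) : ∃ l : L, I a l := by
  obtain ⟨b, c, -, hbc, -⟩ := hA.nondeg
  by_cases hab : a = b
  · obtain ⟨l, ⟨hb, -⟩, -⟩ := hA.point_line b c hbc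
    exact ⟨l, hab ▸ hb⟩
  · obtain ⟨l, ⟨ha, -⟩, -⟩ := hA.point_line a b hab
    exact ⟨l, ha⟩

theorem parallel_trans {g h k : L} (hgh : Parallel I g h) (hhk : Parallel I h k) :
    Parallel I g k := by
  rcases hgh with rfl | hgh
  · exact hhk
  rcases hhk with rfl | hhk
  · exact .inr hgh
  by_cases hgk : g = k
  · exact .inl hgk
  refine .inr fun p ⟨hpg, hpk⟩ => hgk ?_
  obtain ⟨l, -, hl⟩ := hA.playfair p h fun hph => hgh p ⟨hpg, hph⟩
  exact (hl g ⟨hpg, fun q hq => hgh q hq.symm⟩).trans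
    (hl k ⟨hpk, fun q hq => hhk q hq⟩).symm

theorem eq_setOf_parallel {Cl : Set L} (hC : IsParallelClass I Cl) {l : L} (hl : l ∈ Cl) :
    Cl = {k | Parallel I l k} := by
  obtain ⟨g, rfl⟩ := hC
  ext k
  exact ⟨fun hk => hA.parallel_trans hl.symm hk, fun hk => hA.parallel_trans hl hk⟩

theorem exists_mem_incident {Cl : Set L} (hC : IsParallelClass I Cl) (a : P) :
    ∃ l ∈ Cl, I a l := by
  obtain ⟨g, rfl⟩ := hC
  by_cases hag : I a g
  · exact ⟨g, .inl rfl, hag⟩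
  · obtain ⟨l, ⟨hal, hgl⟩, -⟩ := hA.playfair a g hag
    exact ⟨l, .inr hgl, hal⟩

theorem card_lines_through {m : ℕ} (hord : AffOrder I m) (hm : m ≠ 0) (a : P) :
    Nat.card {g : L // I a g} = m + 1 := by
  classical
  obtain ⟨l₀, ha⟩ := hA.exists_not_incident a
  set M : {g : L // I a g} → Prop := fun g => ∃ q, I q g.1 ∧ I q l₀
  have hmeet : Nat.card {g // M g} = m := by
    rw [← hord l₀, ← card_lines_through_meeting hA.point_line ha]
    exact Nat.card_congr (Equiv.subtypeSubtypeEquivSubtypeInter (I a) fun g => ∃ q, I q g ∧ I q l₀)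
  have hpar : Nat.card {g // ¬ M g} = 1 := by
    obtain ⟨g₀, ⟨hag₀, hg₀⟩, huniq⟩ := hA.playfair a l₀ ha
    have hpar_eq (g : {g // ¬ M g}) : g.1.1 = g₀ :=
      huniq _ ⟨g.1.2, fun q hq => g.2 ⟨q, hq.2, hq.1⟩⟩
    refine Nat.card_eq_one_iff_unique.mpr ⟨⟨fun g g' => ?_⟩, ⟨⟨⟨g₀, hag₀⟩, ?_⟩⟩⟩
    · exact Subtype.ext (Subtype.ext ((hpar_eq g).trans (hpar_eq g').symm))
    · exact fun ⟨q, hq, hq₀⟩ => hg₀ q ⟨hq₀, hq⟩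
  have : Finite {g // M g} := Nat.finite_of_card_ne_zero (by omega)
  have : Finite {g // ¬ M g} := Nat.finite_of_card_ne_zero (by omega)
  rw [← Nat.card_congr (Equiv.sumCompl M), Nat.card_sum, hmeet, hpar]

theorem card_parallelClass {m : ℕ} (hord : AffOrder I m) (hm : m ≠ 0) :
    Nat.card {Cl : Set L // IsParallelClass I Cl} = m + 1 := by
  obtain ⟨a, -⟩ := hA.nondeg
  rw [← hA.card_lines_through hord hm a]
  refine (Nat.card_eq_of_bijective (fun g : {g // I a g} => ⟨{k | Parallel I g k}, g, rfl⟩)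
    ⟨fun g g' hgg' => ?_, fun Cl => ?_⟩).symm
  · have hs : {k | Parallel I g.1 k} = {k | Parallel I g'.1 k} := congrArg Subtype.val hgg'
    have hg' : Parallel I g g' := (hs ▸ .inl rfl : g'.1 ∈ {k | Parallel I g.1 k})
    rcases hg' with hg' | hg'
    · exact Subtype.ext hg'
    · exact absurd ⟨g.2, g'.2⟩ (hg' a)
  · obtain ⟨l, hl, hal⟩ := hA.exists_mem_incident Cl.2 a
    exact ⟨⟨l, hal⟩, Subtype.ext (hA.eq_setOf_parallel Cl.2 hl).symm⟩

theorem of_equiv {P' L' : Type} {I' : P' → L' → Prop} (eP : P ≃ P') (eL : L ≃ L')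
    (h : ∀ p l, I p l ↔ I' (eP p) (eL l)) : IsAffinePlane I' where
  point_line p' q' hpq := by
    obtain ⟨p, rfl⟩ := eP.surjective p'
    obtain ⟨q, rfl⟩ := eP.surjective q'
    exact (eL.existsUnique_congr fun l => by rw [h, h]).mp
      (hA.point_line p q (ne_of_apply_ne eP hpq))
  playfair p' l' hpl := by
    obtain ⟨p, rfl⟩ := eP.surjective p'
    obtain ⟨l, rfl⟩ := eL.surjective l'
    refine (eL.existsUnique_congr fun g => ?_).mp (hA.playfair p l (by rwa [h]))
    rw [h, eP.forall_congr (q := fun x => ¬(I' x (eL l) ∧ I' x (eL g))) fun q => by rw [h, h]]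
  nondeg := by
    obtain ⟨a, b, c, hab, hac, hbc, hcol⟩ := hA.nondeg
    refine ⟨eP a, eP b, eP c, eP.injective.ne hab, eP.injective.ne hac, eP.injective.ne hbc,
      (eL.forall_congr fun l => ?_).mp hcol⟩
    rw [h, h, h]

end IsAffinePlane

end IncidenceGeometry

section Order

variable {P L : Type} {I : P → L → Prop} {m : ℕ}

theorem AffOrder.exists_incident (hord : AffOrder I m) (hm : m ≠ 0) (l : L) : ∃ p, I p l := by
  obtain ⟨⟨p, hp⟩⟩ := (Nat.card_pos_iff.mp (by rw [hord l]; omega)).1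
  exact ⟨p, hp⟩

theorem AffOrder.exists_two_incident (hord : AffOrder I m) (hm : 2 ≤ m) (l : L) :
    ∃ p q, p ≠ q ∧ I p l ∧ I q l := by
  have : Finite {p // I p l} := Nat.finite_of_card_ne_zero (by rw [hord l]; omega)
  have : Nontrivial {p // I p l} := Finite.one_lt_card_iff_nontrivial.mp (by rw [hord l]; omega)
  obtain ⟨⟨p, hp⟩, ⟨q, hq⟩, hpq⟩ := exists_pair_ne {p // I p l}
  exact ⟨p, q, fun e => hpq (Subtype.ext e), hp, hq⟩

theorem IsAffinePlane.eq_of_setOf_incident_eq (hA : IsAffinePlane I) (hord : AffOrder I m)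
    (hm : 2 ≤ m) {l l' : L} (h : {p | I p l} = {p | I p l'}) : l = l' := by
  obtain ⟨p, q, hpq, hp, hq⟩ := hord.exists_two_incident hm l
  have hp' : p ∈ {p | I p l'} := h ▸ hp
  have hq' : q ∈ {p | I p l'} := h ▸ hq
  exact eq_of_two_common_points hA.point_line hpq hp hq hp' hq'

end Order

namespace IsOrthArray2

variable {R Col S : Type} {F : R → Col → S}

theorem exists_apply_eq (hF : IsOrthArray2 F) {c c' : Col} (hcc' : c ≠ c') (s : S) :
    ∃ r, F r c = s := by
  obtain ⟨r, hr⟩ := (hF c c' hcc').surjective (s, s)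
  exact ⟨r, congrArg Prod.fst hr⟩

theorem card_fiber (hF : IsOrthArray2 F) {c c' : Col} (hcc' : c ≠ c') (s : S) :
    Nat.card {r // F r c = s} = Nat.card S := by
  have e : {t : S × S // t.1 = s} ≃ S :=
    ⟨fun t => t.1.2, fun b => ⟨(s, b), rfl⟩, fun ⟨_, ht⟩ => by subst ht; rfl, fun _ => rfl⟩
  exact Nat.card_congr
    (((Equiv.ofBijective _ (hF c c' hcc')).subtypeEquiv fun _ => Iff.rfl).trans e)

/-- Two distinct rows agree in at most one column, and in each column exactly `n - 1` other
rows agree with `r`; as `(n + 1) (n - 1) = n ^ 2 - 1`, every other row agrees with `r`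
somewhere. -/
theorem exists_apply_eq_apply [Finite R] (hF : IsOrthArray2 F) {n : ℕ}
    (hR : Nat.card R = n ^ 2) (hCol : Nat.card Col = n + 1) (hS : Nat.card S = n)
    (r r' : R) : ∃ c, F r c = F r' c := by
  have hn : n ≠ 0 := by
    rintro rfl
    exact Nat.card_ne_zero.mpr ⟨⟨r⟩, inferInstance⟩ hR
  have : Finite Col := Nat.finite_of_card_ne_zero (by omega)
  have : Nontrivial Col := Finite.one_lt_card_iff_nontrivial.mp (by omega)
  obtain rfl | hr' := eq_or_ne r' r
  · exact ⟨Classical.arbitrary Col, rfl⟩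
  set T : Col → Set R := fun c => {x | F x c = F r c} \ {r}
  have hT (c : Col) : Nat.card (T c) = n - 1 := by
    obtain ⟨c', hc'⟩ := exists_ne c
    rw [Nat.card_coe_set_eq,
      Set.ncard_sdiff_singleton_of_mem (show r ∈ {x | F x c = F r c} from rfl),
      ← Nat.card_coe_set_eq, Set.coe_ofPred, hF.card_fiber hc'.symm, hS]
  let Φ : (Σ c, T c) → ({r}ᶜ : Set R) := fun x => ⟨x.2, x.2.2.2⟩
  have hΦ : Function.Injective Φ := by
    rintro ⟨c₁, x₁, hx₁, hx₁r⟩ ⟨c₂, x₂, hx₂, hx₂r⟩ hx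
    obtain rfl : x₁ = x₂ := congrArg Subtype.val hx
    by_cases hc : c₁ = c₂
    · subst hc
      rfl
    · exact absurd ((hF c₁ c₂ hc).injective (Prod.ext hx₁ hx₂)) hx₁r
  have hcard : Nat.card (Σ c, T c) = Nat.card ({r}ᶜ : Set R) := by
    have := Fintype.ofFinite Col
    rw [Nat.card_sigma, Finset.sum_congr rfl fun c _ => hT c, Finset.sum_const,
      Finset.card_univ, ← Nat.card_eq_fintype_card, hCol, smul_eq_mul, Nat.card_coe_set_eq,
      Set.compl_eq_univ_sdiff, Set.ncard_sdiff_singleton_of_mem (Set.mem_univ r), Set.ncard_univ,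
      hR, ← Nat.sq_sub_sq, one_pow]
  obtain ⟨⟨c, x, hxc, _⟩, hx⟩ :=
    ((Nat.bijective_iff_injective_and_card Φ).mpr ⟨hΦ, hcard⟩).surjective ⟨r', hr'⟩
  obtain rfl : x = r' := congrArg Subtype.val hx
  exact ⟨c, hxc.symm⟩

end IsOrthArray2

namespace PHData

variable {m : ℕ} (D : PHData m)

def lineAt (p : D.Pt) (g : D.HLn) (h : D.I p g.1) : D.ALn p :=
  D.C p g.1 h (D.O g.1 g.2 ⟨p, h⟩)

section Labels

variable {D} {p : D.Pt}

theorem C_not_parallel {l₁ l₂ : D.Ln} (h₁ : D.I p l₁) (h₂ : D.I p l₂) (hl : l₁ ≠ l₂)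
    (s₁ : D.Sym l₁) (s₂ : D.Sym l₂) : ¬ Parallel (D.AI p) (D.C p l₁ h₁ s₁) (D.C p l₂ h₂ s₂) := by
  intro hpar
  apply D.C_distinct p l₁ l₂ h₁ h₂ hl
  rw [(D.aff p).eq_setOf_parallel (D.C_class p l₁ h₁) ⟨s₁, rfl⟩,
    (D.aff p).eq_setOf_parallel (D.C_class p l₂ h₂) ⟨s₂, rfl⟩,
    (D.aff p).eq_setOf_parallel ⟨_, rfl⟩ hpar]

theorem eq_of_C_eq {l₁ l₂ : D.Ln} {h₁ : D.I p l₁} {h₂ : D.I p l₂} {s₁ : D.Sym l₁}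
    {s₂ : D.Sym l₂} (he : D.C p l₁ h₁ s₁ = D.C p l₂ h₂ s₂) : l₁ = l₂ := by
  by_contra hl
  exact C_not_parallel h₁ h₂ hl s₁ s₂ (.inl he)

theorem eq_of_incident_C {l : D.Ln} (h : D.I p l) {s s' : D.Sym l} {a : D.APt p}
    (ha : D.AI p a (D.C p l h s)) (ha' : D.AI p a (D.C p l h s')) : s = s' := by
  have hpar : Parallel (D.AI p) (D.C p l h s) (D.C p l h s') := by
    have : D.C p l h s' ∈ Set.range (D.C p l h) := ⟨s', rfl⟩
    rwa [(D.aff p).eq_setOf_parallel (D.C_class p l h) ⟨s, rfl⟩] at this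
  rcases hpar with he | hd
  · exact D.C_inj p l h he
  · exact absurd ⟨ha, ha'⟩ (hd a)

theorem exists_incident_C {l : D.Ln} (h : D.I p l) (a : D.APt p) :
    ∃ s, D.AI p a (D.C p l h s) := by
  obtain ⟨-, ⟨s, rfl⟩, ha⟩ := (D.aff p).exists_mem_incident (D.C_class p l h) a
  exact ⟨s, ha⟩

/-- The `m + 1` lines of `𝒫` through `p` label distinct parallel classes of `𝒜_p`, which has
exactly `m + 1` of them. -/
theorem exists_C_eq (hm : m ≠ 0) (ℓ : D.ALn p) : ∃ l h s, D.C p l h s = ℓ := by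
  let F : {l // D.I p l} → {Cl : Set (D.ALn p) // IsParallelClass (D.AI p) Cl} :=
    fun l => ⟨Set.range (D.C p l.1 l.2), D.C_class p l.1 l.2⟩
  have hF : F.Injective := fun l l' hll' => Subtype.ext <| by_contra fun hne =>
    D.C_distinct p _ _ l.2 l'.2 hne (congrArg Subtype.val hll')
  have hcard := (D.aff p).card_parallelClass (D.aord p) hm
  have : Finite {Cl : Set (D.ALn p) // IsParallelClass (D.AI p) Cl} :=
    Nat.finite_of_card_ne_zero (by omega)
  obtain ⟨l, hl⟩ := ((Nat.bijective_iff_injective_and_card F).mpr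
    ⟨hF, by rw [hcard, D.proj.card_lines_through D.ord]⟩).surjective ⟨_, ℓ, rfl⟩
  have hrange : Set.range (D.C p l.1 l.2) = {k | Parallel (D.AI p) ℓ k} := congrArg Subtype.val hl
  obtain ⟨s, hs⟩ : ℓ ∈ Set.range (D.C p l.1 l.2) := hrange ▸ .inl rfl
  exact ⟨l.1, l.2, s, hs⟩

end Labels

section Columns

variable {D} {l : D.Ln}

theorem exists_ne_column (hm : m ≠ 0) (c : {p // D.I p l}) : ∃ c', c' ≠ c := by
  have : Finite {p // D.I p l} := Nat.finite_of_card_ne_zero (by rw [D.ord l]; omega)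
  have : Nontrivial {p // D.I p l} :=
    Finite.one_lt_card_iff_nontrivial.mp (by rw [D.ord l]; omega)
  exact exists_ne c

theorem exists_row (hm : m ≠ 0) (c : {p // D.I p l}) (s : D.Sym l) : ∃ r, D.O l r c = s :=
  let ⟨_, hc'⟩ := exists_ne_column hm c
  (D.oa l).exists_apply_eq hc'.symm s

theorem card_rows (hm : m ≠ 0) (c : {p // D.I p l}) (s : D.Sym l) :
    Nat.card {r // D.O l r c = s} = m :=
  let ⟨_, hc'⟩ := exists_ne_column hm c
  ((D.oa l).card_fiber hc'.symm s).trans (D.sym_card l)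

theorem exists_column_agree (hm : m ≠ 0) (r r' : D.Row l) :
    ∃ c, D.O l r c = D.O l r' c := by
  have : Finite (D.Row l) := Nat.finite_of_card_ne_zero (by rw [D.row_card l]; positivity)
  exact (D.oa l).exists_apply_eq_apply (D.row_card l) (D.ord l) (D.sym_card l) r r'

end Columns

variable {D}

theorem exists_lineAt_eq (hm : m ≠ 0) {p : D.Pt} (ℓ : D.ALn p) :
    ∃ g h, D.lineAt p g h = ℓ := by
  obtain ⟨l, h, s, rfl⟩ := exists_C_eq hm ℓ
  obtain ⟨r, hr⟩ := exists_row hm ⟨p, h⟩ s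
  exact ⟨⟨l, r⟩, h, congrArg (D.C p l h) hr⟩

theorem card_lineAt_eq (hm : m ≠ 0) {p : D.Pt} (ℓ : D.ALn p) :
    Nat.card {g // ∃ h, D.lineAt p g h = ℓ} = m := by
  obtain ⟨l₀, h₀, s₀, rfl⟩ := exists_C_eq hm ℓ
  refine (Nat.card_eq_of_bijective (fun r => ⟨⟨l₀, r.1⟩, h₀, congrArg (D.C p l₀ h₀) r.2⟩)
    ⟨fun r r' hrr' => Subtype.ext (sigma_mk_injective (congrArg Subtype.val hrr')), ?_⟩).symm.trans
    (card_rows hm ⟨p, h₀⟩ s₀)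
  rintro ⟨⟨l, r⟩, h, he⟩
  obtain rfl := eq_of_C_eq he
  exact ⟨⟨r, D.C_inj p l h he⟩, rfl⟩

theorem exists_HLn_incident_both (hm : m ≠ 0) (x y : D.HPt) : ∃ g, D.HI x g ∧ D.HI y g := by
  obtain ⟨p, a⟩ := x
  obtain ⟨q, b⟩ := y
  obtain rfl | hpq := eq_or_ne p q
  · obtain ⟨ℓ, ha, hb⟩ : ∃ ℓ, D.AI p a ℓ ∧ D.AI p b ℓ := by
      obtain rfl | hab := eq_or_ne a b
      · obtain ⟨ℓ, hℓ⟩ := (D.aff p).exists_incident a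
        exact ⟨ℓ, hℓ, hℓ⟩
      · exact ((D.aff p).point_line a b hab).exists
    obtain ⟨g, h, rfl⟩ := exists_lineAt_eq hm ℓ
    exact ⟨g, ⟨h, ha⟩, ⟨h, hb⟩⟩
  · obtain ⟨l, ⟨hp, hq⟩, -⟩ := D.proj.point_line p q hpq
    obtain ⟨s, hs⟩ := exists_incident_C hp a
    obtain ⟨s', hs'⟩ := exists_incident_C hq b
    obtain ⟨r, hr⟩ := (D.oa l ⟨p, hp⟩ ⟨q, hq⟩ fun e => hpq (congrArg Subtype.val e)).surjective
      (s, s')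
    simp only [Prod.mk.injEq] at hr
    exact ⟨⟨l, r⟩, ⟨hp, hr.1 ▸ hs⟩, ⟨hq, hr.2 ▸ hs'⟩⟩

theorem exists_HPt_incident_both (hm : m ≠ 0) (g g' : D.HLn) :
    ∃ x, D.HI x g ∧ D.HI x g' := by
  obtain ⟨l, r⟩ := g
  obtain ⟨l', r'⟩ := g'
  obtain rfl | hl := eq_or_ne l l'
  · obtain ⟨c, hc⟩ := exists_column_agree hm r r'
    obtain ⟨a, ha⟩ := (D.aord c.1).exists_incident hm (D.C c.1 l c.2 (D.O l r c))
    exact ⟨⟨c.1, a⟩, ⟨c.2, ha⟩, ⟨c.2, hc ▸ ha⟩⟩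
  · obtain ⟨p, ⟨h, h'⟩, -⟩ := D.proj.line_point l l' hl
    have hmeet := C_not_parallel h h' hl (D.O l r ⟨p, h⟩) (D.O l' r' ⟨p, h'⟩)
    simp only [Parallel, not_or, not_forall, not_not] at hmeet
    obtain ⟨-, a, ha, ha'⟩ := hmeet
    exact ⟨⟨p, a⟩, ⟨h, ha⟩, ⟨h', ha'⟩⟩

theorem fst_eq_of_two_common_HPt {g g' : D.HLn} {x y : D.HPt} (hxy : x ≠ y) (hxg : D.HI x g)
    (hyg : D.HI y g) (hxg' : D.HI x g') (hyg' : D.HI y g') : g.1 = g'.1 := by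
  obtain ⟨p, a⟩ := x
  obtain ⟨q, b⟩ := y
  obtain ⟨hp, ha⟩ := hxg
  obtain ⟨hq, hb⟩ := hyg
  obtain ⟨hp', ha'⟩ := hxg'
  obtain ⟨hq', hb'⟩ := hyg'
  obtain rfl | hpq := eq_or_ne p q
  · have hab : a ≠ b := fun e => hxy (e ▸ rfl)
    exact eq_of_C_eq (eq_of_two_common_points (D.aff p).point_line hab ha hb ha' hb')
  · exact eq_of_two_common_points D.proj.point_line hpq hp hq hp' hq'

theorem fst_eq_of_two_common_HLn {x y : D.HPt} {g g' : D.HLn} (hgg' : g ≠ g') (hxg : D.HI x g)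
    (hyg : D.HI y g) (hxg' : D.HI x g') (hyg' : D.HI y g') : x.1 = y.1 := by
  obtain ⟨l, r⟩ := g
  obtain ⟨l', r'⟩ := g'
  obtain ⟨p, a⟩ := x
  obtain ⟨q, b⟩ := y
  obtain ⟨hp, ha⟩ := hxg
  obtain ⟨hq, hb⟩ := hyg
  obtain ⟨hp', ha'⟩ := hxg'
  obtain ⟨hq', hb'⟩ := hyg'
  by_contra hpq
  obtain rfl : l = l' := eq_of_two_common_points D.proj.point_line hpq hp hq hp' hq'
  refine hgg' (congrArg (Sigma.mk l) ((D.oa l ⟨p, hp⟩ ⟨q, hq⟩ ?_).injective ?_))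
  · exact fun e => hpq (congrArg Subtype.val e)
  · exact Prod.ext (eq_of_incident_C hp ha ha') (eq_of_incident_C hq hb hb')

theorem isPHPlaneWith (hm : m ≠ 0) :
    IsPHPlaneWith D.HI D.nPt D.nLn D.I (fun x => x.1) (fun g => g.1) where
  nP_equiv := ⟨fun _ => rfl, Eq.symm, Eq.trans⟩
  nL_equiv := ⟨fun _ => rfl, Eq.symm, Eq.trans⟩
  join := exists_HLn_incident_both hm
  meet := exists_HPt_incident_both hm
  line_nbr _ _ := fun ⟨_, _, hxy, hxg, hxg', hyg, hyg'⟩ =>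
    fst_eq_of_two_common_HPt hxy hxg hyg hxg' hyg'
  point_nbr _ _ := fun ⟨_, _, hgg', hxg, hyg, hxg', hyg'⟩ =>
    fst_eq_of_two_common_HLn hgg' hxg hyg hxg' hyg'
  target_proj := D.proj
  φP_surj p := let ⟨a, _⟩ := (D.aff p).nondeg; ⟨⟨p, a⟩, rfl⟩
  φL_surj l :=
    let ⟨r⟩ := (Nat.card_pos_iff.mp (by rw [D.row_card l]; positivity)).1
    ⟨⟨l, r⟩, rfl⟩
  incid_pres _ _ := fun ⟨h, _⟩ => h
  nP_iff _ _ := Iff.rfl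
  nL_iff _ _ := Iff.rfl

theorem nbrsOnLines : NbrsOnLines D.HI D.nPt m := by
  rintro g ⟨p, a⟩ ⟨h, -⟩
  refine (Nat.card_eq_of_bijective (fun b => ⟨⟨p, b.1⟩, ⟨h, b.2⟩, rfl⟩)
    ⟨fun b b' hbb' => Subtype.ext (sigma_mk_injective (congrArg Subtype.val hbb')), ?_⟩).symm.trans
    (D.aord p (D.lineAt p g h))
  rintro ⟨⟨q, b⟩, ⟨-, hb⟩, hpq : p = q⟩
  subst hpq
  exact ⟨⟨b, hb⟩, rfl⟩

section Neighbourhood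

variable {p : D.Pt}

theorem setOf_nPt_HI (a₀ : D.APt p) (g : D.HLn) :
    {y | D.nPt y ⟨p, a₀⟩ ∧ D.HI y g} = Sigma.mk p '' {b | D.HI ⟨p, b⟩ g} := by
  ext ⟨q, b⟩
  constructor
  · rintro ⟨hqp : q = p, hb⟩
    subst hqp
    exact ⟨b, hb, rfl⟩
  · rintro ⟨b, hb, he⟩
    cases he
    exact ⟨rfl, hb⟩

theorem setOf_HI_eq_lineAt {g : D.HLn} (h : D.I p g.1) :
    {b | D.HI ⟨p, b⟩ g} = {b | D.AI p b (D.lineAt p g h)} := by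
  ext b
  exact ⟨fun ⟨_, hb⟩ => hb, fun hb => ⟨h, hb⟩⟩

theorem setOf_HI_eq_iff (hm : 2 ≤ m) (g : D.HLn) (ℓ : D.ALn p) :
    {b | D.HI ⟨p, b⟩ g} = {b | D.AI p b ℓ} ↔ ∃ h, D.lineAt p g h = ℓ := by
  refine ⟨fun he => ?_, fun ⟨h, hℓ⟩ => hℓ ▸ setOf_HI_eq_lineAt h⟩
  obtain ⟨b, hb⟩ := (D.aord p).exists_incident (by omega) ℓ
  obtain ⟨h, -⟩ : b ∈ {b | D.HI ⟨p, b⟩ g} := he ▸ hb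
  exact ⟨h, (D.aff p).eq_of_setOf_incident_eq (D.aord p) hm (setOf_HI_eq_lineAt h ▸ he)⟩

theorem image_mem_nbrLines (hm : m ≠ 0) (a₀ : D.APt p) (ℓ : D.ALn p) :
    Sigma.mk p '' {b | D.AI p b ℓ} ∈ NbrLines D.HI D.nPt ⟨p, a₀⟩ := by
  obtain ⟨b, hb⟩ := (D.aord p).exists_incident hm ℓ
  obtain ⟨g, h, rfl⟩ := exists_lineAt_eq hm ℓ
  exact ⟨⟨⟨p, b⟩, b, hb, rfl⟩, g, by rw [setOf_nPt_HI, setOf_HI_eq_lineAt h]⟩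

theorem bijective_image_nbrLines (hm : 2 ≤ m) (a₀ : D.APt p) :
    Function.Bijective fun ℓ : D.ALn p =>
      (⟨_, image_mem_nbrLines (by omega) a₀ ℓ⟩ : NbrLines D.HI D.nPt ⟨p, a₀⟩) := by
  refine ⟨fun ℓ ℓ' he => ?_, ?_⟩
  · exact (D.aff p).eq_of_setOf_incident_eq (D.aord p) hm
      (Set.image_injective.mpr sigma_mk_injective (congrArg Subtype.val he))
  · rintro ⟨s, ⟨x, hx⟩, g, rfl⟩
    rw [setOf_nPt_HI] at hx
    obtain ⟨b, ⟨h, -⟩, -⟩ := hx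
    exact ⟨D.lineAt p g h, Subtype.ext
      ((setOf_nPt_HI a₀ g).trans (congrArg _ (setOf_HI_eq_lineAt h))).symm⟩

theorem twoUniform (hm : 2 ≤ m) : TwoUniform D.HI D.nPt := by
  rintro ⟨p, a₀⟩
  have hbij := bijective_image_nbrLines hm a₀
  refine ⟨(D.aff p).of_equiv (Equiv.sigmaSubtype p).symm (Equiv.ofBijective _ hbij)
    fun b ℓ => (sigma_mk_injective.mem_set_image (s := {b | D.AI p b ℓ})).symm, m, fun s => ?_⟩
  obtain ⟨ℓ, rfl⟩ := hbij.surjective s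
  refine (Nat.card_congr (Equiv.subtypeEquivRight fun g => ?_)).trans
    (card_lineAt_eq (by omega) ℓ)
  exact ((setOf_nPt_HI a₀ g).congr_left).trans
    (((Set.image_injective.mpr sigma_mk_injective).eq_iff).trans (setOf_HI_eq_iff hm g ℓ))

end Neighbourhood

end PHData

/-- For `m ≥ 2`, the structure `ℋ` produced by the Hjelmslev construction,
with point-neighbour relation "same first coordinate", line-neighbour relation "same first
coordinate", and quotient maps the first projections, is a 2-uniform `(m, m)` projective
Hjelmslev plane. -/
theorem hjelmslev_construction_is_2uniform_PH_plane (m : ℕ) (hm : 2 ≤ m) (D : PHData m) :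
    IsPHPlaneWith D.HI D.nPt D.nLn D.I (fun x => x.1) (fun g => g.1) ∧
    NbrsOnLines D.HI D.nPt m ∧ ProjOrder D.I m ∧
    TwoUniform D.HI D.nPt :=
  ⟨D.isPHPlaneWith (by omega), D.nbrsOnLines, D.ord, D.twoUniform hm⟩
end

section
/- Let m ≥ 2 and let ℋ be the incidence structure produced by the Hjelmslev construction from a projective plane 𝒫 of order m, affine planes 𝒜_p of order m, orthogonal arrays 𝒪_l = OA(2, m+1, m), and admissible choices of labeled parallel classes. Then any two distinct points of ℋ are incident with at least one common line of ℋ, and any two distinct points of ℋ that are incident with more than one common line lie in the same point-neighbourhood, i.e., have the same first coordinate. -/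
section Aux

variable {P L : Type} {I : P → L → Prop}

lemma par_symm (g h : L) (hp : Parallel I g h) : Parallel I h g := by
  rcases hp with rfl | hd
  · exact Or.inl rfl
  · exact Or.inr fun p hp => hd p ⟨hp.2, hp.1⟩

lemma par_trans (hA : IsAffinePlane I) {g h k : L} (h1 : Parallel I g h)
    (h2 : Parallel I h k) : Parallel I g k := by
  rcases h1 with rfl | hd1
  · exact h2
  rcases h2 with rfl | hd2
  · exact Or.inr hd1
  by_cases hgk : g = k
  · exact Or.inl hgk
  by_cases hex : ∃ p : P, I p g ∧ I p k
  · obtain ⟨x, hxg, hxk⟩ := hex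
    have hxh : ¬ I x h := fun hxh => hd1 x ⟨hxg, hxh⟩
    obtain ⟨w, _, hu⟩ := hA.playfair x h hxh
    have e1 : g = w := hu g ⟨hxg, fun q hq => hd1 q ⟨hq.2, hq.1⟩⟩
    have e2 : k = w := hu k ⟨hxk, fun q hq => hd2 q ⟨hq.1, hq.2⟩⟩
    exact Or.inl (e1.trans e2.symm)
  · exact Or.inr (by push_neg at hex; exact fun p hp => hex p hp.1 hp.2)

/-- Two parallel lines through a common point coincide. -/
lemma par_eq_of_common (_hA : IsAffinePlane I) {g h : L} {a : P}
    (hp : Parallel I g h) (hag : I a g) (hah : I a h) : g = h := by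
  rcases hp with rfl | hd
  · rfl
  · exact absurd ⟨hag, hah⟩ (hd a)

lemma class_line_unique (hA : IsAffinePlane I) {g h1 h2 : L} {a : P}
    (p1 : Parallel I g h1) (p2 : Parallel I g h2) (ha1 : I a h1) (ha2 : I a h2) :
    h1 = h2 :=
  par_eq_of_common hA (par_trans hA (par_symm g h1 p1) p2) ha1 ha2

lemma exists_class_line (hA : IsAffinePlane I) (g : L) (a : P) :
    ∃ h : L, Parallel I g h ∧ I a h := by
  by_cases hag : I a g
  · exact ⟨g, Or.inl rfl, hag⟩
  · obtain ⟨h, ⟨hah, hd⟩, _⟩ := hA.playfair a g hag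
    exact ⟨h, Or.inr hd, hah⟩

/-- From three noncollinear points, every point misses some line. -/
lemma exists_not_incident (join : ∀ p q : P, p ≠ q → ∃! l : L, I p l ∧ I q l)
    {a b c : P} (hab : a ≠ b) (hac : a ≠ c) (hbc : b ≠ c)
    (hcol : ∀ l : L, ¬(I a l ∧ I b l ∧ I c l)) (x : P) : ∃ l : L, ¬ I x l := by
  by_cases hxb : x = b
  · obtain ⟨l, ⟨ha, hc⟩, _⟩ := join a c hac
    exact ⟨l, fun hx => hcol l ⟨ha, hxb ▸ hx, hc⟩⟩
  · obtain ⟨l1, ⟨hb1, hc1⟩, _⟩ := join b c hbc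
    by_cases hx1 : I x l1
    · obtain ⟨l2, ⟨ha2, hb2⟩, _⟩ := join a b hab
      refine ⟨l2, fun hx2 => ?_⟩
      obtain ⟨l3, _, u3⟩ := join x b hxb
      have e1 : l1 = l3 := u3 l1 ⟨hx1, hb1⟩
      have e2 : l2 = l3 := u3 l2 ⟨hx2, hb2⟩
      exact hcol l2 ⟨ha2, hb2, (e1.trans e2.symm) ▸ hc1⟩
    · exact ⟨l1, hx1⟩

lemma proj_lines_through (hP : IsProjectivePlane I) {m : ℕ} (hord : ProjOrder I m)
    (p : P) : Nat.card {g : L // I p g} = m + 1 := by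
  classical
  obtain ⟨a, b, c, d, hab, hac, had, hbc, hbd, hcd, h1, _, _, _⟩ := hP.nondeg
  obtain ⟨l, hl⟩ := exists_not_incident hP.point_line hab hac hbc h1 p
  have hjoin : ∀ q : {q : P // I q l}, ∃! g : L, I p g ∧ I q.1 g :=
    fun q => hP.point_line p q (fun e => hl (e ▸ q.2))
  let F : {q : P // I q l} → {g : L // I p g} :=
    fun q => ⟨(hjoin q).choose, (hjoin q).choose_spec.1.1⟩
  have hbij : Function.Bijective F := by
    constructor
    · intro q1 q2 he
      have hv : (hjoin q1).choose = (hjoin q2).choose := congrArg Subtype.val he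
      by_contra hne
      have hq12 : q1.1 ≠ q2.1 := fun e => hne (Subtype.ext e)
      obtain ⟨w, _, uw⟩ := hP.point_line q1.1 q2.1 hq12
      have e1 : (hjoin q1).choose = w :=
        uw _ ⟨(hjoin q1).choose_spec.1.2, hv ▸ (hjoin q2).choose_spec.1.2⟩
      have e2 : l = w := uw l ⟨q1.2, q2.2⟩
      exact hl (e2 ▸ e1 ▸ (hjoin q1).choose_spec.1.1)
    · rintro ⟨g, hg⟩
      have hgl : g ≠ l := fun e => hl (e ▸ hg)
      obtain ⟨q, ⟨hq1, hq2⟩, _⟩ := hP.line_point g l hgl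
      refine ⟨⟨q, hq2⟩, Subtype.ext ?_⟩
      exact ((hjoin ⟨q, hq2⟩).choose_spec.2 g ⟨hg, hq1⟩).symm
  rw [← Nat.card_eq_of_bijective F hbij, hord l]

lemma aff_lines_through (hA : IsAffinePlane I) {m : ℕ} (hm : m ≠ 0)
    (hord : AffOrder I m) (a : P) : Nat.card {g : L // I a g} = m + 1 := by
  classical
  obtain ⟨b, c, d, hbc, hbd, hcd, hcol⟩ := hA.nondeg
  obtain ⟨l, hl⟩ := exists_not_incident hA.point_line hbc hbd hcd hcol a
  have hfin : Finite {q : P // I q l} :=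
    Nat.finite_of_card_ne_zero (by rw [hord l]; exact hm)
  let F : {g : L // I a g} → Option {q : P // I q l} :=
    fun g => if h : ∃ q : P, I q l ∧ I q g.1 then some ⟨h.choose, h.choose_spec.1⟩
      else none
  have hbij : Function.Bijective F := by
    constructor
    · intro g1 g2 he
      simp only [F] at he
      split_ifs at he with h1 h2 h2
      · -- both meet l
        have hq : h1.choose = h2.choose := congrArg Subtype.val (Option.some_injective _ he)
        have haq : a ≠ h1.choose := fun e => hl (e ▸ h1.choose_spec.1)
        obtain ⟨w, _, uw⟩ := hA.point_line a h1.choose haq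
        have e1 : g1.1 = w := uw g1.1 ⟨g1.2, h1.choose_spec.2⟩
        have e2 : g2.1 = w := uw g2.1 ⟨g2.2, hq ▸ h2.choose_spec.2⟩
        exact Subtype.ext (e1.trans e2.symm)
      · -- both disjoint from l
        push_neg at h1 h2
        obtain ⟨w, _, uw⟩ := hA.playfair a l hl
        have e1 : g1.1 = w := uw g1.1 ⟨g1.2, fun q hq => h1 q hq.1 hq.2⟩
        have e2 : g2.1 = w := uw g2.1 ⟨g2.2, fun q hq => h2 q hq.1 hq.2⟩
        exact Subtype.ext (e1.trans e2.symm)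
    · rintro (_ | ⟨q, hq⟩)
      · obtain ⟨w, ⟨haw, hd⟩, _⟩ := hA.playfair a l hl
        refine ⟨⟨w, haw⟩, ?_⟩
        simp only [F]
        rw [dif_neg]
        push_neg
        exact fun q hql hqw => hd q ⟨hql, hqw⟩
      · have haq : a ≠ q := fun e => hl (e ▸ hq)
        obtain ⟨w, ⟨haw, hqw⟩, _⟩ := hA.point_line a q haq
        have hex : ∃ q' : P, I q' l ∧ I q' w := ⟨q, hq, hqw⟩
        refine ⟨⟨w, haw⟩, ?_⟩
        simp only [F]
        rw [dif_pos hex]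
        congr 1
        refine Subtype.ext ?_
        by_contra hne
        obtain ⟨u, _, uu⟩ := hA.point_line hex.choose q hne
        have e1 : l = u := uu l ⟨hex.choose_spec.1, hq⟩
        have e2 : w = u := uu w ⟨hex.choose_spec.2, hqw⟩
        exact hl ((e1.trans e2.symm) ▸ haw)
  rw [Nat.card_eq_of_bijective F hbij, Finite.card_option, hord l]

end Aux

section HjAux

lemma hj_exists_sym {m : ℕ} (D : PHData m) (p : D.Pt) (l : D.Ln) (h : D.I p l)
    (a : D.APt p) : ∃ s : D.Sym l, D.AI p a (D.C p l h s) := by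
  obtain ⟨g₀, hg₀⟩ := D.C_class p l h
  obtain ⟨k, hkp, hka⟩ := exists_class_line (D.aff p) g₀ a
  have hk : k ∈ Set.range (D.C p l h) := by rw [hg₀]; exact hkp
  obtain ⟨s, hs⟩ := hk
  exact ⟨s, hs ▸ hka⟩

lemma hj_unique_sym {m : ℕ} (D : PHData m) (p : D.Pt) (l : D.Ln) (h : D.I p l)
    (a : D.APt p) {s₁ s₂ : D.Sym l} (h₁ : D.AI p a (D.C p l h s₁))
    (h₂ : D.AI p a (D.C p l h s₂)) : s₁ = s₂ := by
  obtain ⟨g₀, hg₀⟩ := D.C_class p l h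
  have m₁ : D.C p l h s₁ ∈ Set.range (D.C p l h) := ⟨s₁, rfl⟩
  have m₂ : D.C p l h s₂ ∈ Set.range (D.C p l h) := ⟨s₂, rfl⟩
  rw [hg₀] at m₁ m₂
  exact D.C_inj p l h (class_line_unique (D.aff p) m₁ m₂ h₁ h₂)

end HjAux

/-- In the structure `ℋ` produced by the Hjelmslev construction, any two
distinct points are incident with at least one common line, and any two distinct points
incident with more than one common line have the same first coordinate (lie in the same
point-neighbourhood). -/
theorem hjelmslev_construction_points (m : ℕ) (hm : 2 ≤ m) (D : PHData m) :
    (∀ x y : D.HPt, x ≠ y → ∃ g : D.HLn, D.HI x g ∧ D.HI y g) ∧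
    (∀ x y : D.HPt, x ≠ y → ∀ g h : D.HLn, g ≠ h →
      (D.HI x g ∧ D.HI y g) → (D.HI x h ∧ D.HI y h) → x.1 = y.1) := by
  classical
  constructor
  · rintro ⟨p, a⟩ ⟨q, b⟩ hxy
    by_cases hpq : p = q
    · subst hpq
      have hab : a ≠ b := fun e => hxy (by rw [e])
      have hψ : ∀ l : {l : D.Ln // D.I p l}, ∃ s : D.Sym l.1, D.AI p a (D.C p l.1 l.2 s) :=
        fun l => hj_exists_sym D p l.1 l.2 a
      let ψ : {l : D.Ln // D.I p l} → {g : D.ALn p // D.AI p a g} :=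
        fun l => ⟨D.C p l.1 l.2 (hψ l).choose, (hψ l).choose_spec⟩
      have hinj : Function.Injective ψ := by
        intro l₁ l₂ he
        have hv : D.C p l₁.1 l₁.2 (hψ l₁).choose = D.C p l₂.1 l₂.2 (hψ l₂).choose :=
          congrArg Subtype.val he
        by_contra hne
        have hne' : l₁.1 ≠ l₂.1 := fun e => hne (Subtype.ext e)
        apply D.C_distinct p l₁.1 l₂.1 l₁.2 l₂.2 hne'
        obtain ⟨g₁, hg₁⟩ := D.C_class p l₁.1 l₁.2
        obtain ⟨g₂, hg₂⟩ := D.C_class p l₂.1 l₂.2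
        rw [hg₁, hg₂]
        have m₁ : Parallel (D.AI p) g₁ (D.C p l₁.1 l₁.2 (hψ l₁).choose) := by
          have hmem : D.C p l₁.1 l₁.2 (hψ l₁).choose ∈ Set.range (D.C p l₁.1 l₁.2) :=
            ⟨_, rfl⟩
          rwa [hg₁] at hmem
        have m₂ : Parallel (D.AI p) g₂ (D.C p l₁.1 l₁.2 (hψ l₁).choose) := by
          have hmem : D.C p l₂.1 l₂.2 (hψ l₂).choose ∈ Set.range (D.C p l₂.1 l₂.2) :=
            ⟨_, rfl⟩
          rw [hg₂] at hmem
          rwa [← hv] at hmem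
        exact Set.ext fun h =>
          ⟨fun hh => par_trans (D.aff p) m₂ (par_trans (D.aff p) (par_symm _ _ m₁) hh),
           fun hh => par_trans (D.aff p) m₁ (par_trans (D.aff p) (par_symm _ _ m₂) hh)⟩
      have c1 : Nat.card {l : D.Ln // D.I p l} = m + 1 := proj_lines_through D.proj D.ord p
      have c2 : Nat.card {g : D.ALn p // D.AI p a g} = m + 1 :=
        aff_lines_through (D.aff p) (by omega) (D.aord p) a
      haveI : Finite {g : D.ALn p // D.AI p a g} :=
        Nat.finite_of_card_ne_zero (by rw [c2]; omega)
      have hsurj : Function.Surjective ψ :=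
        ((Nat.bijective_iff_injective_and_card ψ).mpr ⟨hinj, c1.trans c2.symm⟩).2
      obtain ⟨gab, ⟨hga, hgb⟩, _⟩ := (D.aff p).point_line a b hab
      obtain ⟨l₀, hl₀⟩ := hsurj ⟨gab, hga⟩
      have hceq : D.C p l₀.1 l₀.2 (hψ l₀).choose = gab := congrArg Subtype.val hl₀
      haveI : Finite {q : D.Pt // D.I q l₀.1} :=
        Nat.finite_of_card_ne_zero (by rw [D.ord l₀.1]; omega)
      haveI hnt : Nontrivial {q : D.Pt // D.I q l₀.1} :=
        Finite.one_lt_card_iff_nontrivial.mp (by rw [D.ord l₀.1]; omega)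
      obtain ⟨col₂, hcol₂⟩ := exists_ne (⟨p, l₀.2⟩ : {q : D.Pt // D.I q l₀.1})
      have hsym : Nonempty (D.Sym l₀.1) :=
        (Nat.card_pos_iff.mp (by rw [D.sym_card l₀.1]; omega)).1
      obtain ⟨t⟩ := hsym
      obtain ⟨r, hr⟩ := (D.oa l₀.1 ⟨p, l₀.2⟩ col₂ (Ne.symm hcol₂)).2 ((hψ l₀).choose, t)
      have hentry : D.O l₀.1 r ⟨p, l₀.2⟩ = (hψ l₀).choose := congrArg Prod.fst hr
      refine ⟨⟨l₀.1, r⟩, ⟨l₀.2, ?_⟩, ⟨l₀.2, ?_⟩⟩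
      · rw [hentry, hceq]; exact hga
      · rw [hentry, hceq]; exact hgb
    · obtain ⟨l, ⟨hpl, hql⟩, _⟩ := D.proj.point_line p q hpq
      obtain ⟨sp, hsp⟩ := hj_exists_sym D p l hpl a
      obtain ⟨sq, hsq⟩ := hj_exists_sym D q l hql b
      have hcol : (⟨p, hpl⟩ : {x : D.Pt // D.I x l}) ≠ ⟨q, hql⟩ :=
        fun e => hpq (congrArg Subtype.val e)
      obtain ⟨r, hr⟩ := (D.oa l ⟨p, hpl⟩ ⟨q, hql⟩ hcol).2 (sp, sq)
      refine ⟨⟨l, r⟩, ⟨hpl, ?_⟩, ⟨hql, ?_⟩⟩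
      · rw [show D.O l r ⟨p, hpl⟩ = sp from congrArg Prod.fst hr]; exact hsp
      · rw [show D.O l r ⟨q, hql⟩ = sq from congrArg Prod.snd hr]; exact hsq
  · rintro ⟨p, a⟩ ⟨q, b⟩ _hxy ⟨l₁, r₁⟩ ⟨l₂, r₂⟩ hgh ⟨⟨h1p, ha1⟩, ⟨h1q, hb1⟩⟩
      ⟨⟨h2p, ha2⟩, ⟨h2q, hb2⟩⟩
    show p = q
    by_contra hpq
    by_cases hl : l₁ = l₂
    · subst hl
      have hr : r₁ ≠ r₂ := fun e => hgh (by rw [e])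
      have ep : D.O l₁ r₁ ⟨p, h1p⟩ = D.O l₁ r₂ ⟨p, h1p⟩ :=
        hj_unique_sym D p l₁ h1p a ha1 ha2
      have eq' : D.O l₁ r₁ ⟨q, h1q⟩ = D.O l₁ r₂ ⟨q, h1q⟩ :=
        hj_unique_sym D q l₁ h1q b hb1 hb2
      have hcol : (⟨p, h1p⟩ : {x : D.Pt // D.I x l₁}) ≠ ⟨q, h1q⟩ :=
        fun e => hpq (congrArg Subtype.val e)
      exact hr ((D.oa l₁ ⟨p, h1p⟩ ⟨q, h1q⟩ hcol).1 (Prod.ext ep eq'))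
    · obtain ⟨z, _, uz⟩ := D.proj.line_point l₁ l₂ hl
      exact hpq ((uz p ⟨h1p, h2p⟩).trans (uz q ⟨h1q, h2q⟩).symm)
end

section
/- Let m ≥ 2 and let ℋ be the incidence structure produced by the Hjelmslev construction from a projective plane 𝒫 of order m, affine planes 𝒜_p of order m, orthogonal arrays 𝒪_l = OA(2, m+1, m), and admissible choices of labeled parallel classes. For each point (p, a) of ℋ, the point-neighbourhood restriction — whose points are the points of ℋ with first coordinate p, and whose lines are the nonempty intersections of lines of ℋ with this point set — is an affine plane of order m (isomorphic to 𝒜_p), and every line of this restriction arises as the restriction of exactly m lines of ℋ. -/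
section HjHelpers

variable {P L : Type}

lemma hj_eq_of_two_lines {I : P → L → Prop}
    (pl : ∀ p q : P, p ≠ q → ∃! l : L, I p l ∧ I q l)
    {g h : L} (hgh : g ≠ h) {p q : P}
    (h1 : I p g) (h2 : I p h) (h3 : I q g) (h4 : I q h) : p = q := by
  by_contra hpq
  obtain ⟨l, -, hu⟩ := pl p q hpq
  exact hgh ((hu g ⟨h1, h3⟩).trans (hu h ⟨h2, h4⟩).symm)

lemma hj_line_eq_of_two_points {I : P → L → Prop}
    (pl : ∀ p q : P, p ≠ q → ∃! l : L, I p l ∧ I q l)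
    {p q : P} (hpq : p ≠ q) {g h : L}
    (h1 : I p g) (h2 : I q g) (h3 : I p h) (h4 : I q h) : g = h := by
  obtain ⟨l, -, hu⟩ := pl p q hpq
  exact (hu g ⟨h1, h2⟩).trans (hu h ⟨h3, h4⟩).symm

lemma hj_parallel_symm {I : P → L → Prop} {g h : L} (h1 : Parallel I g h) :
    Parallel I h g := by
  rcases h1 with rfl | h1
  · exact Or.inl rfl
  · exact Or.inr fun p hp => h1 p ⟨hp.2, hp.1⟩

lemma hj_parallel_trans {I : P → L → Prop} (A : IsAffinePlane I) {g h k : L}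
    (h1 : Parallel I g h) (h2 : Parallel I h k) : Parallel I g k := by
  rcases h1 with rfl | h1
  · exact h2
  rcases h2 with rfl | h2
  · exact Or.inr h1
  by_cases hgk : g = k
  · exact Or.inl hgk
  right
  intro q hq
  have hqh : ¬ I q h := fun c => h1 q ⟨hq.1, c⟩
  obtain ⟨l, -, hu⟩ := A.playfair q h hqh
  exact hgk ((hu g ⟨hq.1, fun r hr => h1 r ⟨hr.2, hr.1⟩⟩).trans
    (hu k ⟨hq.2, fun r hr => h2 r hr⟩).symm)

lemma hj_class_eq {I : P → L → Prop} (A : IsAffinePlane I) {C1 C2 : Set L}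
    (hC1 : IsParallelClass I C1) (hC2 : IsParallelClass I C2) {k : L}
    (h1 : k ∈ C1) (h2 : k ∈ C2) : C1 = C2 := by
  obtain ⟨g1, rfl⟩ := hC1; obtain ⟨g2, rfl⟩ := hC2
  ext h
  constructor
  · intro hh
    exact hj_parallel_trans A (hj_parallel_trans A h2 (hj_parallel_symm h1)) hh
  · intro hh
    exact hj_parallel_trans A (hj_parallel_trans A h1 (hj_parallel_symm h2)) hh

lemma hj_class_line_unique {I : P → L → Prop} (A : IsAffinePlane I) {Cl : Set L}
    (hCl : IsParallelClass I Cl) (b : P) : ∃! h : L, h ∈ Cl ∧ I b h := by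
  obtain ⟨g, rfl⟩ := hCl
  by_cases hbg : I b g
  · refine ⟨g, ⟨Or.inl rfl, hbg⟩, ?_⟩
    rintro h ⟨hpar, hbh⟩
    rcases hpar with rfl | hdisj
    · rfl
    · exact absurd ⟨hbg, hbh⟩ (hdisj b)
  · obtain ⟨h, ⟨hbh, hdisj⟩, hu⟩ := A.playfair b g hbg
    refine ⟨h, ⟨Or.inr hdisj, hbh⟩, ?_⟩
    rintro h' ⟨hpar, hbh'⟩
    rcases hpar with rfl | hdisj'
    · exact absurd hbh' hbg
    · exact hu h' ⟨hbh', hdisj'⟩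

lemma hj_proj_line_avoid {I : P → L → Prop} (PP : IsProjectivePlane I) (p : P) :
    ∃ l : L, ¬ I p l := by
  obtain ⟨a, b, c, d, hab, hac, had, hbc, hbd, hcd, nabc, nabd, nacd, nbcd⟩ := PP.nondeg
  obtain ⟨lab, ⟨ha1, hb1⟩, -⟩ := PP.point_line a b hab
  obtain ⟨lcd, ⟨hc1, hd1⟩, -⟩ := PP.point_line c d hcd
  obtain ⟨lad, ⟨ha2, hd2⟩, -⟩ := PP.point_line a d had
  by_cases h1 : I p lab
  · by_cases h2 : I p lcd
    · refine ⟨lad, fun h3 => ?_⟩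
      have hne : lab ≠ lad := fun he => nabd lad ⟨he ▸ ha1, he ▸ hb1, hd2⟩
      have hpa : p = a := hj_eq_of_two_lines PP.point_line hne h1 h3 ha1 ha2
      have hne2 : lcd ≠ lad := fun he => nacd lad ⟨ha2, he ▸ hc1, he ▸ hd1⟩
      have hpd : p = d := hj_eq_of_two_lines PP.point_line hne2 h2 h3 hd1 hd2
      exact had (hpa.symm.trans hpd)
    · exact ⟨lcd, h2⟩
  · exact ⟨lab, h1⟩

lemma hj_aff_line_avoid {I : P → L → Prop} (A : IsAffinePlane I) (b : P) :
    ∃ l : L, ¬ I b l := by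
  obtain ⟨u, v, w, huv, huw, hvw, nuvw⟩ := A.nondeg
  obtain ⟨luv, ⟨hu1, hv1⟩, -⟩ := A.point_line u v huv
  obtain ⟨lvw, ⟨hv2, hw2⟩, -⟩ := A.point_line v w hvw
  obtain ⟨luw, ⟨hu3, hw3⟩, -⟩ := A.point_line u w huw
  by_cases h1 : I b luv
  · by_cases h2 : I b luw
    · refine ⟨lvw, fun h3 => ?_⟩
      have hne : luv ≠ luw := fun he => nuvw luw ⟨hu3, he ▸ hv1, hw3⟩
      have hbu : b = u := hj_eq_of_two_lines A.point_line hne h1 h2 hu1 hu3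
      exact nuvw lvw ⟨hbu ▸ h3, hv2, hw2⟩
    · exact ⟨luw, h2⟩
  · exact ⟨luv, h1⟩

lemma hj_proj_card_lines_through {I : P → L → Prop} (PP : IsProjectivePlane I) {m : ℕ}
    (ord : ProjOrder I m) (p : P) : Nat.card {g : L // I p g} = m + 1 := by
  classical
  obtain ⟨l₀, hl₀⟩ := hj_proj_line_avoid PP p
  have hpq : ∀ q : {q : P // I q l₀}, p ≠ q.1 := fun q he => hl₀ (he ▸ q.2)
  let f : {q : P // I q l₀} → {g : L // I p g} :=
    fun q => ⟨(PP.point_line p q.1 (hpq q)).choose,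
      (PP.point_line p q.1 (hpq q)).choose_spec.1.1⟩
  have hfq : ∀ q : {q : P // I q l₀}, I q.1 (f q).1 :=
    fun q => (PP.point_line p q.1 (hpq q)).choose_spec.1.2
  have hfu : ∀ (q : {q : P // I q l₀}) (g : L), I p g → I q.1 g → g = (f q).1 :=
    fun q g h1 h2 => (PP.point_line p q.1 (hpq q)).choose_spec.2 g ⟨h1, h2⟩
  have hbij : Function.Bijective f := by
    constructor
    · intro q1 q2 he
      apply Subtype.ext
      have hgl : (f q1).1 ≠ l₀ := fun hc => hl₀ (hc ▸ (f q1).2)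
      have h2 : I q2.1 (f q1).1 := by rw [he]; exact hfq q2
      exact hj_eq_of_two_lines PP.point_line hgl (hfq q1) q1.2 h2 q2.2
    · rintro ⟨g, hg⟩
      have hgl : g ≠ l₀ := fun hc => hl₀ (hc ▸ hg)
      obtain ⟨q, ⟨hq1, hq2⟩, -⟩ := PP.line_point g l₀ hgl
      refine ⟨⟨q, hq2⟩, Subtype.ext (hfu ⟨q, hq2⟩ g hg hq1).symm⟩
  rw [← Nat.card_eq_of_bijective f hbij]
  exact ord l₀

lemma hj_aff_card_lines_through {I : P → L → Prop} (A : IsAffinePlane I) {m : ℕ}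
    (hm : 2 ≤ m) (ord : AffOrder I m) (b : P) : Nat.card {g : L // I b g} = m + 1 := by
  classical
  obtain ⟨l₀, hl₀⟩ := hj_aff_line_avoid A b
  have hpq : ∀ q : {q : P // I q l₀}, b ≠ q.1 := fun q he => hl₀ (he ▸ q.2)
  obtain ⟨gpar, ⟨hg1, hg2⟩, hgu⟩ := A.playfair b l₀ hl₀
  let f : Option {q : P // I q l₀} → {g : L // I b g} := fun o =>
    match o with
    | some q => ⟨(A.point_line b q.1 (hpq q)).choose,
        (A.point_line b q.1 (hpq q)).choose_spec.1.1⟩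
    | none => ⟨gpar, hg1⟩
  have hfq : ∀ q : {q : P // I q l₀}, I q.1 (f (some q)).1 :=
    fun q => (A.point_line b q.1 (hpq q)).choose_spec.1.2
  have hfu : ∀ (q : {q : P // I q l₀}) (g : L), I b g → I q.1 g → g = (f (some q)).1 :=
    fun q g h1 h2 => (A.point_line b q.1 (hpq q)).choose_spec.2 g ⟨h1, h2⟩
  have hbij : Function.Bijective f := by
    constructor
    · intro o1 o2 he
      match o1, o2 with
      | some q1, some q2 =>
        have hgl : (f (some q1)).1 ≠ l₀ := fun hc => hl₀ (hc ▸ (f (some q1)).2)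
        have h2 : I q2.1 (f (some q1)).1 := by rw [he]; exact hfq q2
        have := hj_eq_of_two_lines A.point_line hgl (hfq q1) q1.2 h2 q2.2
        exact congrArg some (Subtype.ext this)
      | some q1, none =>
        exfalso
        have h2 : I q1.1 gpar := by
          have := hfq q1
          rw [he] at this
          exact this
        exact hg2 q1.1 ⟨q1.2, h2⟩
      | none, some q2 =>
        exfalso
        have h2 : I q2.1 gpar := by
          have := hfq q2
          rw [← he] at this
          exact this
        exact hg2 q2.1 ⟨q2.2, h2⟩
      | none, none => rfl
    · rintro ⟨g, hg⟩
      by_cases hmeet : ∃ q : P, I q l₀ ∧ I q g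
      · obtain ⟨q, hq1, hq2⟩ := hmeet
        exact ⟨some ⟨q, hq1⟩, Subtype.ext (hfu ⟨q, hq1⟩ g hg hq2).symm⟩
      · push_neg at hmeet
        refine ⟨none, Subtype.ext ?_⟩
        exact (hgu g ⟨hg, fun q hq => (hmeet q hq.1) hq.2⟩).symm
  haveI : Finite {q : P // I q l₀} :=
    Nat.finite_of_card_ne_zero (by rw [ord l₀]; omega)
  rw [← Nat.card_eq_of_bijective f hbij, Finite.card_option, ord l₀]

lemma hj_oa_column_card {R Col S : Type} {F : R → Col → S} (oa : IsOrthArray2 F)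
    {c₁ c₂ : Col} (hne : c₁ ≠ c₂) (s : S) :
    Nat.card {r : R // F r c₁ = s} = Nat.card S := by
  have e1 : {r : R // F r c₁ = s} ≃ {x : S × S // x.1 = s} :=
    (Equiv.ofBijective _ (oa c₁ c₂ hne)).subtypeEquiv (fun r => Iff.rfl)
  have e2 : {x : S × S // x.1 = s} ≃ S :=
    ⟨fun x => x.1.2, fun t => ⟨(s, t), rfl⟩,
      by rintro ⟨⟨x1, x2⟩, rfl⟩; rfl, fun t => rfl⟩
  rw [Nat.card_congr (e1.trans e2)]

lemma IsAffinePlane.ofEquiv {P' L' : Type} {I : P → L → Prop} {I' : P' → L' → Prop}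
    (eP : P ≃ P') (eL : L ≃ L') (hIff : ∀ p l, I p l ↔ I' (eP p) (eL l))
    (A : IsAffinePlane I') : IsAffinePlane I := by
  have hIff' : ∀ (p : P) (l' : L'), I p (eL.symm l') ↔ I' (eP p) l' := fun p l' => by
    rw [hIff, eL.apply_symm_apply]
  constructor
  · intro p q hpq
    obtain ⟨l', ⟨h1, h2⟩, hu⟩ :=
      A.point_line (eP p) (eP q) (fun he => hpq (eP.injective he))
    refine ⟨eL.symm l', ⟨(hIff' p l').2 h1, (hIff' q l').2 h2⟩, ?_⟩
    rintro l ⟨ha, hb⟩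
    have := hu (eL l) ⟨(hIff p l).1 ha, (hIff q l).1 hb⟩
    exact eL.injective (by rw [this, eL.apply_symm_apply])
  · intro p l hpl
    obtain ⟨g', ⟨h1, h2⟩, hu⟩ := A.playfair (eP p) (eL l) (fun c => hpl ((hIff p l).2 c))
    refine ⟨eL.symm g', ⟨(hIff' p g').2 h1,
      fun q hq => h2 (eP q) ⟨(hIff q l).1 hq.1, (hIff' q g').1 hq.2⟩⟩, ?_⟩
    rintro g ⟨ha, hb⟩
    have h3 : ∀ q' : P', ¬(I' q' (eL l) ∧ I' q' (eL g)) := by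
      intro q' hq'
      refine hb (eP.symm q') ⟨(hIff _ l).2 ?_, (hIff _ g).2 ?_⟩
      · rw [eP.apply_symm_apply]; exact hq'.1
      · rw [eP.apply_symm_apply]; exact hq'.2
    have := hu (eL g) ⟨(hIff p g).1 ha, h3⟩
    exact eL.injective (by rw [this, eL.apply_symm_apply])
  · obtain ⟨a, b, c, hab, hac, hbc, h⟩ := A.nondeg
    refine ⟨eP.symm a, eP.symm b, eP.symm c,
      fun he => hab (eP.symm.injective he),
      fun he => hac (eP.symm.injective he),
      fun he => hbc (eP.symm.injective he),
      fun l hl => h (eL l) ?_⟩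
    refine ⟨?_, ?_, ?_⟩
    · have := (hIff _ l).1 hl.1; rwa [eP.apply_symm_apply] at this
    · have := (hIff _ l).1 hl.2.1; rwa [eP.apply_symm_apply] at this
    · have := (hIff _ l).1 hl.2.2; rwa [eP.apply_symm_apply] at this

lemma AffOrder.ofEquiv {P' L' : Type} {I : P → L → Prop} {I' : P' → L' → Prop}
    (eP : P ≃ P') (eL : L ≃ L') (hIff : ∀ p l, I p l ↔ I' (eP p) (eL l))
    {m : ℕ} (ho : AffOrder I' m) : AffOrder I m := fun l => by
  rw [Nat.card_congr (Equiv.subtypeEquiv (p := fun p => I p l)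
    (q := fun p' => I' p' (eL l)) eP (fun p => hIff p l))]
  exact ho (eL l)

end HjHelpers

section HjSet

variable {m : ℕ} (D : PHData m)

/-- The set of points of `ℋ` over `p` lying over the affine line `L` of `𝒜_p`. -/
def hjSet (p : D.Pt) (L : D.ALn p) : Set D.HPt :=
  (fun b => (⟨p, b⟩ : D.HPt)) '' {b : D.APt p | D.AI p b L}

lemma hjSet_mem (p : D.Pt) (b : D.APt p) (L : D.ALn p) :
    (⟨p, b⟩ : D.HPt) ∈ hjSet D p L ↔ D.AI p b L := by
  constructor
  · rintro ⟨b', hb', heq⟩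
    obtain ⟨-, h2⟩ := Sigma.mk.inj_iff.mp heq
    exact (eq_of_heq h2) ▸ hb'
  · intro h
    exact ⟨b, h, rfl⟩

lemma hjSet_restr (x : D.HPt) (g : D.HLn) (h : D.I x.1 g.1) :
    {q : D.HPt | D.nPt q x ∧ D.HI q g} =
      hjSet D x.1 (D.C x.1 g.1 h (D.O g.1 g.2 ⟨x.1, h⟩)) := by
  ext ⟨q1, b⟩
  constructor
  · rintro ⟨he, h', hb⟩
    change q1 = x.1 at he
    subst he
    exact ⟨b, hb, rfl⟩
  · rintro ⟨b', hb', heq⟩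
    rw [← heq]
    exact ⟨rfl, h, hb'⟩

lemma hj_exI (x : D.HPt) (g : D.HLn)
    (hne : ({q : D.HPt | D.nPt q x ∧ D.HI q g}).Nonempty) : D.I x.1 g.1 := by
  obtain ⟨q, hq1, h', -⟩ := hne
  exact hq1 ▸ h'

/-- Point equivalence between the neighbourhood of `x` and `𝒜_{x.1}`. -/
def hjPtEquiv (x : D.HPt) : {q : D.HPt // D.nPt q x} ≃ D.APt x.1 where
  toFun q := cast (congrArg D.APt q.2) q.1.2
  invFun b := ⟨⟨x.1, b⟩, rfl⟩
  left_inv := by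
    rintro ⟨⟨q1, b⟩, he⟩
    change q1 = x.1 at he
    subst he
    rfl
  right_inv b := rfl

end HjSet

/-- In the structure `ℋ` produced by the Hjelmslev construction, each
point-neighbourhood restriction (points: the points with the same first coordinate `p`;
lines: the nonempty intersections of lines of `ℋ` with this point set) is an affine plane of
order `m`, isomorphic to `𝒜_p`, and every line of the restriction is the restriction of
exactly `m` lines of `ℋ`. -/
theorem hjelmslev_construction_nbhd_restriction (m : ℕ) (hm : 2 ≤ m) (D : PHData m)
    (x : D.HPt) :
    IsAffinePlane (fun (q : {q : D.HPt // D.nPt q x}) (s : NbrLines D.HI D.nPt x) =>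
      (q : D.HPt) ∈ (s : Set D.HPt)) ∧
    AffOrder (fun (q : {q : D.HPt // D.nPt q x}) (s : NbrLines D.HI D.nPt x) =>
      (q : D.HPt) ∈ (s : Set D.HPt)) m ∧
    (∃ (eP : {q : D.HPt // D.nPt q x} ≃ D.APt x.1)
        (eL : NbrLines D.HI D.nPt x ≃ D.ALn x.1),
      ∀ (q : {q : D.HPt // D.nPt q x}) (s : NbrLines D.HI D.nPt x),
        ((q : D.HPt) ∈ (s : Set D.HPt)) ↔ D.AI x.1 (eP q) (eL s)) ∧
    (∀ s : NbrLines D.HI D.nPt x,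
      Nat.card {g : D.HLn // {q : D.HPt | D.nPt q x ∧ D.HI q g} = (s : Set D.HPt)} = m) := by
  classical
  have aline_fin : ∀ L : D.ALn x.1, Finite {b : D.APt x.1 // D.AI x.1 b L} := fun L =>
    Nat.finite_of_card_ne_zero (by rw [D.aord x.1 L]; omega)
  have aline_nontriv : ∀ L : D.ALn x.1, Nontrivial {b : D.APt x.1 // D.AI x.1 b L} :=
    fun L => by
      haveI := aline_fin L
      exact Finite.one_lt_card_iff_nontrivial.mp (by rw [D.aord x.1 L]; omega)
  have aline_ex : ∀ L : D.ALn x.1, ∃ b, D.AI x.1 b L := fun L => by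
    haveI := aline_nontriv L
    obtain ⟨⟨b, hb⟩, -, -⟩ := exists_pair_ne {b : D.APt x.1 // D.AI x.1 b L}
    exact ⟨b, hb⟩
  have coverage : ∀ L : D.ALn x.1, ∃ (l : D.Ln) (h : D.I x.1 l) (s : D.Sym l),
      D.C x.1 l h s = L := by
    intro L
    obtain ⟨b, hbL⟩ := aline_ex L
    have hcl : ∀ l : {l : D.Ln // D.I x.1 l},
        ∃! k : D.ALn x.1, k ∈ Set.range (D.C x.1 l.1 l.2) ∧ D.AI x.1 b k :=
      fun l => hj_class_line_unique (D.aff x.1) (D.C_class x.1 l.1 l.2) b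
    let f : {l : D.Ln // D.I x.1 l} → {g : D.ALn x.1 // D.AI x.1 b g} :=
      fun l => ⟨(hcl l).choose, (hcl l).choose_spec.1.2⟩
    have hfr : ∀ l, (f l).1 ∈ Set.range (D.C x.1 l.1 l.2) :=
      fun l => (hcl l).choose_spec.1.1
    have finj : Function.Injective f := by
      intro l1 l2 he
      apply Subtype.ext
      by_contra hne
      have hv : (f l1).1 = (f l2).1 := congrArg Subtype.val he
      have hmem : (f l1).1 ∈ Set.range (D.C x.1 l2.1 l2.2) := hv.symm ▸ hfr l2
      exact D.C_distinct x.1 l1.1 l2.1 l1.2 l2.2 hne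
        (hj_class_eq (D.aff x.1) (D.C_class x.1 l1.1 l1.2) (D.C_class x.1 l2.1 l2.2)
          (hfr l1) hmem)
    have c1 : Nat.card {l : D.Ln // D.I x.1 l} = m + 1 :=
      hj_proj_card_lines_through D.proj D.ord x.1
    have c2 : Nat.card {g : D.ALn x.1 // D.AI x.1 b g} = m + 1 :=
      hj_aff_card_lines_through (D.aff x.1) hm (D.aord x.1) b
    haveI : Finite {g : D.ALn x.1 // D.AI x.1 b g} :=
      Nat.finite_of_card_ne_zero (by rw [c2]; omega)
    have fsurj := ((Nat.bijective_iff_injective_and_card f).mpr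
      ⟨finj, by rw [c1, c2]⟩).surjective
    obtain ⟨l, hl⟩ := fsurj ⟨L, hbL⟩
    obtain ⟨s, hs⟩ := hfr l
    exact ⟨l.1, l.2, s, hs.trans (congrArg Subtype.val hl)⟩
  have SLinj : Function.Injective (hjSet D x.1) := by
    intro L1 L2 he
    haveI := aline_nontriv L1
    obtain ⟨b1, b2, hbne⟩ := exists_pair_ne {b : D.APt x.1 // D.AI x.1 b L1}
    have hbv : b1.1 ≠ b2.1 := fun hc => hbne (Subtype.ext hc)
    have h1 : D.AI x.1 b1.1 L2 := (hjSet_mem D x.1 b1.1 L2).1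
      (he ▸ (hjSet_mem D x.1 b1.1 L1).2 b1.2)
    have h2 : D.AI x.1 b2.1 L2 := (hjSet_mem D x.1 b2.1 L2).1
      (he ▸ (hjSet_mem D x.1 b2.1 L1).2 b2.2)
    exact hj_line_eq_of_two_points (D.aff x.1).point_line hbv b1.2 b2.2 h1 h2
  have SLne : ∀ L : D.ALn x.1, (hjSet D x.1 L).Nonempty := fun L => by
    obtain ⟨b, hb⟩ := aline_ex L
    exact ⟨⟨x.1, b⟩, (hjSet_mem D x.1 b L).2 hb⟩
  have SLmemN : ∀ L : D.ALn x.1, hjSet D x.1 L ∈ NbrLines D.HI D.nPt x := by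
    intro L
    obtain ⟨l, h, s, rfl⟩ := coverage L
    haveI : Finite {q : D.Pt // D.I q l} :=
      Nat.finite_of_card_ne_zero (by rw [D.ord l]; omega)
    haveI : Nontrivial {q : D.Pt // D.I q l} :=
      Finite.one_lt_card_iff_nontrivial.mp (by rw [D.ord l]; omega)
    obtain ⟨c₂, hc₂⟩ := exists_ne (⟨x.1, h⟩ : {q : D.Pt // D.I q l})
    obtain ⟨r, hr⟩ := (D.oa l ⟨x.1, h⟩ c₂ (Ne.symm hc₂)).surjective (s, s)
    have hr1 : D.O l r ⟨x.1, h⟩ = s := congrArg Prod.fst hr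
    have hre : {q : D.HPt | D.nPt q x ∧ D.HI q ⟨l, r⟩} =
        hjSet D x.1 (D.C x.1 l h (D.O l r ⟨x.1, h⟩)) := hjSet_restr D x ⟨l, r⟩ h
    rw [hr1] at hre
    exact ⟨SLne _, ⟨l, r⟩, hre.symm⟩
  let Φ : D.ALn x.1 → {s : Set D.HPt // s ∈ NbrLines D.HI D.nPt x} :=
    fun L => ⟨hjSet D x.1 L, SLmemN L⟩
  have hΦ : Function.Bijective Φ := by
    constructor
    · intro L1 L2 he
      exact SLinj (congrArg Subtype.val he)
    · rintro ⟨s, hne, g, rfl⟩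
      exact ⟨_, Subtype.ext (hjSet_restr D x g (hj_exI D x g hne)).symm⟩
  let e := Equiv.ofBijective Φ hΦ
  let eP := hjPtEquiv D x
  let eL := e.symm
  have hsV : ∀ s : NbrLines D.HI D.nPt x, hjSet D x.1 (eL s) = (s : Set D.HPt) :=
    fun s => congrArg Subtype.val (e.apply_symm_apply s)
  have main_iff : ∀ (q : {q : D.HPt // D.nPt q x}) (s : NbrLines D.HI D.nPt x),
      (q : D.HPt) ∈ (s : Set D.HPt) ↔ D.AI x.1 (eP q) (eL s) := by
    intro q s
    rw [← hsV s]
    obtain ⟨⟨q1, b⟩, he⟩ := q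
    change q1 = x.1 at he
    subst he
    exact hjSet_mem D x.1 b (eL s)
  refine ⟨IsAffinePlane.ofEquiv eP eL main_iff (D.aff x.1),
    AffOrder.ofEquiv eP eL main_iff (D.aord x.1),
    ⟨eP, eL, main_iff⟩, ?_⟩
  intro s
  obtain ⟨l, h, σ, hσ⟩ := coverage (eL s)
  haveI : Finite {q : D.Pt // D.I q l} :=
    Nat.finite_of_card_ne_zero (by rw [D.ord l]; omega)
  haveI : Nontrivial {q : D.Pt // D.I q l} :=
    Finite.one_lt_card_iff_nontrivial.mp (by rw [D.ord l]; omega)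
  obtain ⟨c₂, hc₂⟩ := exists_ne (⟨x.1, h⟩ : {q : D.Pt // D.I q l})
  have key : Nat.card {r : D.Row l // D.O l r ⟨x.1, h⟩ = σ} = m := by
    rw [hj_oa_column_card (D.oa l) (Ne.symm hc₂) σ, D.sym_card l]
  let ψ : {r : D.Row l // D.O l r ⟨x.1, h⟩ = σ} →
      {g : D.HLn // {q : D.HPt | D.nPt q x ∧ D.HI q g} = (s : Set D.HPt)} :=
    fun r => ⟨⟨l, r.1⟩, by
      have hre : {q : D.HPt | D.nPt q x ∧ D.HI q ⟨l, r.1⟩} =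
          hjSet D x.1 (D.C x.1 l h (D.O l r.1 ⟨x.1, h⟩)) := hjSet_restr D x ⟨l, r.1⟩ h
      rw [hre, r.2, hσ, hsV s]⟩
  have hψbij : Function.Bijective ψ := by
    constructor
    · intro r1 r2 he
      apply Subtype.ext
      exact eq_of_heq (Sigma.mk.inj_iff.mp (congrArg Subtype.val he)).2
    · rintro ⟨⟨l', r'⟩, hg⟩
      have hne' : ({q : D.HPt | D.nPt q x ∧ D.HI q ⟨l', r'⟩}).Nonempty := by
        rw [hg, ← hsV s]
        exact SLne (eL s)
      have h' : D.I x.1 l' := hj_exI D x ⟨l', r'⟩ hne'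
      have hre : {q : D.HPt | D.nPt q x ∧ D.HI q ⟨l', r'⟩} =
          hjSet D x.1 (D.C x.1 l' h' (D.O l' r' ⟨x.1, h'⟩)) := hjSet_restr D x ⟨l', r'⟩ h'
      have hCeq : D.C x.1 l' h' (D.O l' r' ⟨x.1, h'⟩) = eL s := by
        apply SLinj
        rw [← hre, hg, hsV s]
      have hll : l' = l := by
        by_contra hne2
        exact D.C_distinct x.1 l' l h' h hne2
          (hj_class_eq (D.aff x.1) (D.C_class x.1 l' h') (D.C_class x.1 l h)
            ⟨_, rfl⟩ ⟨σ, hσ.trans hCeq.symm⟩)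
      subst hll
      exact ⟨⟨r', D.C_inj x.1 l' h (hCeq.trans hσ.symm)⟩, Subtype.ext rfl⟩
  calc Nat.card {g : D.HLn // {q : D.HPt | D.nPt q x ∧ D.HI q g} = (s : Set D.HPt)}
      = Nat.card {r : D.Row l // D.O l r ⟨x.1, h⟩ = σ} :=
        (Nat.card_eq_of_bijective ψ hψbij).symm
    _ = m := key
end
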